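/- arXiv:1505.00696 — 8 statements merged into one kernel-verified Lean document; each statement's English description precedes it below -/
import Mathlib

section
/- Suppose a > 0, d > 0, b > 0, and x′(t) ≤ x(t)(b − a·x(t − τ(t))) + d for all t ≥ t₀. Then limsup_{t→+∞} x(t) ≤ −d/b + (d/b + x̄)·e^{b·τ̄}, where x̄ = (b + √(b² + 4ad))/(2a) is the unique positive root of x(ax − b) − d = 0. (Continuous-time case of Lemma 2.15(i).) -/
/-!
Fix a level `y` above the positive root `x̄` of `y (b - a y) + d = 0`, so that
`y (b - a y) + d < 0`. Whenever both `x u` and the delayed value `x (u - τ u)` are at least `y`,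
the inequality gives `x' u ≤ y (b - a y) + d < 0`; hence `x` cannot stay above `y` forever.
Given `t` after such a time, let `σ` be the last time before `t` with `x σ ≤ y`. On `[σ, σ + τbar]`
the crude bound `x' ≤ b x + d` and Grönwall give `x ≤ -d/b + (d/b + y) e^{b τbar}`, and after
`σ + τbar` the solution and its delayed value stay above `y`, so `x` is nonincreasing there.
Letting `y` decrease to `x̄` gives the bound on the limsup.
-/

open Filter Set

lemma sub_le_mul_sub_of_hasDerivAt_le {f f' : ℝ → ℝ} {p q C : ℝ} (hpq : p ≤ q)
    (hf : ∀ u ∈ Icc p q, HasDerivAt f (f' u) u) (hC : ∀ u ∈ Ioo p q, f' u ≤ C) :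
    f q - f p ≤ C * (q - p) := by
  have hf_int : ∀ u ∈ interior (Icc p q), HasDerivAt f (f' u) u := fun u hu =>
    hf u (Ioo_subset_Icc_self (by rwa [interior_Icc] at hu))
  refine (convex_Icc p q).image_sub_le_mul_sub_of_deriv_le
    (fun u hu => (hf u hu).continuousAt.continuousWithinAt)
    (fun u hu => (hf_int u hu).differentiableAt.differentiableWithinAt)
    (fun u hu => ?_) p (left_mem_Icc.2 hpq) q (right_mem_Icc.2 hpq) hpq
  rw [(hf_int u hu).deriv]
  exact hC u (by rwa [interior_Icc] at hu)

lemma le_gronwallBound_of_hasDerivAt {f f' : ℝ → ℝ} {p q δ K ε : ℝ} (hpq : p ≤ q)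
    (hf : ∀ u ∈ Icc p q, HasDerivAt f (f' u) u) (hp : f p ≤ δ)
    (bound : ∀ u ∈ Ico p q, f' u ≤ K * f u + ε) :
    f q ≤ gronwallBound δ K ε (q - p) :=
  le_gronwallBound_of_liminf_deriv_right_le
    (fun u hu => (hf u hu).continuousAt.continuousWithinAt)
    (fun u hu _ hr => (hf u (Ico_subset_Icc_self hu)).hasDerivWithinAt.liminf_right_slope_le hr)
    hp bound q (right_mem_Icc.2 hpq)

lemma exists_last_le_of_continuousOn {f : ℝ → ℝ} {p q y : ℝ} (hpq : p ≤ q)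
    (hf : ContinuousOn f (Icc p q)) (hp : f p ≤ y) :
    ∃ σ ∈ Icc p q, f σ ≤ y ∧ ∀ u ∈ Ioc σ q, y < f u := by
  have hS : IsCompact (Icc p q ∩ f ⁻¹' Iic y) := isCompact_Icc.of_isClosed_subset
    (hf.preimage_isClosed_of_isClosed isClosed_Icc isClosed_Iic) inter_subset_left
  obtain ⟨σ, ⟨hσ, hfσ⟩, hmax⟩ := hS.exists_isGreatest ⟨p, left_mem_Icc.2 hpq, hp⟩
  refine ⟨σ, hσ, hfσ, fun u hu => lt_of_not_ge fun hfu => ?_⟩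
  exact hu.1.not_ge (hmax ⟨⟨hσ.1.trans hu.1.le, hu.2⟩, hfu⟩)

lemma limsup_coe_le_of_forall_gt {α : Type*} {l : Filter α} {f : α → ℝ} {g : ℝ → ℝ} {y₀ : ℝ}
    (hg : ContinuousWithinAt g (Ioi y₀) y₀) (h : ∀ y > y₀, ∀ᶠ t in l, f t ≤ g y) :
    limsup (fun t => (f t : EReal)) l ≤ g y₀ :=
  ge_of_tendsto (continuous_coe_real_ereal.continuousAt.comp_continuousWithinAt hg).tendsto
    (eventually_nhdsWithin_of_forall fun y hy => limsup_le_of_le (by isBoundedDefault)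
      ((h y hy).mono fun _ ht => EReal.coe_le_coe_iff.2 ht))

lemma mul_sub_mul_add_le_of_le {a b d y p q : ℝ} (ha : 0 ≤ a) (hd : 0 ≤ d) (hy : 0 < y)
    (hyd : y * (b - a * y) + d ≤ 0) (hp : y ≤ p) (hq : y ≤ q) :
    p * (b - a * q) + d ≤ y * (b - a * y) + d := by
  have hby : b - a * y ≤ 0 := by nlinarith
  nlinarith [mul_le_mul_of_nonneg_left hq ha]

lemma mul_sub_mul_add_neg_of_gt {a b d y : ℝ} (ha : 0 < a) (hd : 0 ≤ d)
    (hy : (b + Real.sqrt (b ^ 2 + 4 * a * d)) / (2 * a) < y) :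
    y * (b - a * y) + d < 0 := by
  have hs := Real.sq_sqrt (show 0 ≤ b ^ 2 + 4 * a * d by positivity)
  have hs0 := Real.sqrt_nonneg (b ^ 2 + 4 * a * d)
  rw [div_lt_iff₀ (by positivity)] at hy
  nlinarith

section DelayInequality

variable {a b d t₀ τbar y : ℝ} {τ x x' : ℝ → ℝ}

lemma deriv_le_mul_add_of_delay_ineq (ha : 0 ≤ a) (hτ : ∀ t : ℝ, 0 ≤ τ t ∧ τ t ≤ τbar)
    (hxpos : ∀ t : ℝ, t₀ - τbar ≤ t → 0 < x t)
    (hineq : ∀ t : ℝ, t₀ ≤ t → x' t ≤ x t * (b - a * x (t - τ t)) + d)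
    {u : ℝ} (hu : t₀ ≤ u) : x' u ≤ b * x u + d := by
  obtain ⟨hτ0, hτu⟩ := hτ u
  have hxu := hxpos u (by linarith)
  have hxd := hxpos (u - τ u) (by linarith)
  nlinarith [hineq u hu, mul_nonneg (mul_nonneg ha hxd.le) hxu.le]

lemma le_gronwallBound_of_delay_ineq (ha : 0 ≤ a) (hb : 0 < b) (hd : 0 ≤ d) (hy : 0 < y)
    (hyd : y * (b - a * y) + d ≤ 0) (hτ : ∀ t : ℝ, 0 ≤ τ t ∧ τ t ≤ τbar)
    (hxpos : ∀ t : ℝ, t₀ - τbar ≤ t → 0 < x t)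
    (hderiv : ∀ t : ℝ, t₀ ≤ t → HasDerivAt x (x' t) t)
    (hineq : ∀ t : ℝ, t₀ ≤ t → x' t ≤ x t * (b - a * x (t - τ t)) + d)
    {σ₀ : ℝ} (hσ₀ : t₀ ≤ σ₀) (hxσ₀ : x σ₀ ≤ y) {t : ℝ} (ht : σ₀ ≤ t) :
    x t ≤ gronwallBound y b d τbar := by
  obtain ⟨σ, ⟨hσ₀σ, hσt⟩, hxσ, habove⟩ := exists_last_le_of_continuousOn ht
    (fun u hu => (hderiv u (hσ₀.trans hu.1)).continuousAt.continuousWithinAt) hxσ₀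
  have hτbar : 0 ≤ τbar := (hτ t₀).1.trans (hτ t₀).2
  set r := min (σ + τbar) t
  have hσr : σ ≤ r := le_min (by linarith) hσt
  have hxr : x r ≤ gronwallBound y b d τbar := calc
    x r ≤ gronwallBound y b d (r - σ) :=
      le_gronwallBound_of_hasDerivAt hσr (fun u hu => hderiv u (by linarith [hu.1])) hxσ
        fun u hu => deriv_le_mul_add_of_delay_ineq ha hτ hxpos hineq (by linarith [hu.1])
    _ ≤ gronwallBound y b d τbar :=
      gronwallBound_mono hy.le hd hb.le (by linarith [min_le_left (σ + τbar) t])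
  have hxt : x t - x r ≤ 0 * (t - r) := by
    refine sub_le_mul_sub_of_hasDerivAt_le (min_le_right _ _)
      (fun u hu => hderiv u (by linarith [hu.1])) fun u hu => ?_
    have hσu : σ + τbar < u := (min_lt_iff.1 hu.1).resolve_right (not_lt.2 hu.2.le)
    obtain ⟨hτ0, hτu⟩ := hτ u
    calc x' u ≤ x u * (b - a * x (u - τ u)) + d := hineq u (by linarith)
      _ ≤ y * (b - a * y) + d := mul_sub_mul_add_le_of_le ha hd hy hyd
          (habove u ⟨by linarith, hu.2.le⟩).le (habove _ ⟨by linarith, by linarith [hu.2]⟩).le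
      _ ≤ 0 := hyd
  linarith

lemma exists_le_of_delay_ineq (ha : 0 ≤ a) (hd : 0 ≤ d) (hy : 0 < y)
    (hyd : y * (b - a * y) + d < 0) (hτ : ∀ t : ℝ, 0 ≤ τ t ∧ τ t ≤ τbar)
    (hderiv : ∀ t : ℝ, t₀ ≤ t → HasDerivAt x (x' t) t)
    (hineq : ∀ t : ℝ, t₀ ≤ t → x' t ≤ x t * (b - a * x (t - τ t)) + d) :
    ∃ σ, t₀ ≤ σ ∧ x σ ≤ y := by
  by_contra! habove
  have hτbar : 0 ≤ τbar := (hτ t₀).1.trans (hτ t₀).2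
  set T := t₀ + τbar
  set c := -(y * (b - a * y) + d)
  -- by time `q`, decreasing at rate at least `c > 0` from `x T` would bring `x` down to `y`
  set q := T + (x T - y) / c
  have hc : 0 < c := by linarith
  have hxT := habove T (by linarith)
  have hTq : T ≤ q := le_add_of_nonneg_right (div_nonneg (by linarith) hc.le)
  have hdec : x q - x T ≤ -c * (q - T) := by
    refine sub_le_mul_sub_of_hasDerivAt_le hTq (fun u hu => hderiv u (by linarith [hu.1]))
      fun u hu => ?_
    obtain ⟨hτ0, hτu⟩ := hτ u
    calc x' u ≤ x u * (b - a * x (u - τ u)) + d := hineq u (by linarith [hu.1])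
      _ ≤ y * (b - a * y) + d := mul_sub_mul_add_le_of_le ha hd hy hyd.le
          (habove u (by linarith [hu.1])).le (habove _ (by linarith [hu.1])).le
      _ = -c := by ring
  have hcq : -c * (q - T) = y - x T := by
    rw [add_sub_cancel_left, neg_mul, mul_div_cancel₀ _ hc.ne', neg_sub]
  linarith [habove q (by linarith)]

end DelayInequality

theorem limsup_le_of_delay_ineq_explicit_continuous_general
    (a b d t₀ τbar : ℝ) (τ x x' : ℝ → ℝ)
    (ha : 0 < a) (hd : 0 < d) (hb : 0 < b)
    (hτ : ∀ t : ℝ, 0 ≤ τ t ∧ τ t ≤ τbar)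
    (hxpos : ∀ t : ℝ, t₀ - τbar ≤ t → 0 < x t)
    (hderiv : ∀ t : ℝ, t₀ ≤ t → HasDerivAt x (x' t) t)
    (hineq : ∀ t : ℝ, t₀ ≤ t → x' t ≤ x t * (b - a * x (t - τ t)) + d) :
    Filter.limsup (fun t : ℝ => ((x t : EReal))) Filter.atTop ≤
      ((-d / b + (d / b + (b + Real.sqrt (b ^ 2 + 4 * a * d)) / (2 * a)) *
        Real.exp (b * τbar) : ℝ) : EReal) := by
  set xbar := (b + Real.sqrt (b ^ 2 + 4 * a * d)) / (2 * a)
  have hxbar : 0 < xbar := by positivity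
  have hbound : ∀ y > xbar, ∀ᶠ t in atTop, x t ≤ gronwallBound y b d τbar := by
    intro y hy
    have hyd := mul_sub_mul_add_neg_of_gt ha hd.le hy
    obtain ⟨σ, hσ, hxσ⟩ :=
      exists_le_of_delay_ineq ha.le hd.le (hxbar.trans hy) hyd hτ hderiv hineq
    exact eventually_atTop.2 ⟨σ, fun t ht => le_gronwallBound_of_delay_ineq ha.le hb hd.le
      (hxbar.trans hy) hyd.le hτ hxpos hderiv hineq hσ hxσ ht⟩
  have hcont : Continuous fun y => gronwallBound y b d τbar := by
    simp only [gronwallBound_of_K_ne_0 hb.ne']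
    fun_prop
  convert limsup_coe_le_of_forall_gt hcont.continuousWithinAt hbound using 2
  rw [gronwallBound_of_K_ne_0 hb.ne']
  ring

/-- Continuous-time case of Lemma 2.15(i): if `x′(t) ≤ x(t)(b − a x(t − τ(t))) + d` for
`t ≥ t₀`, then `limsup_{t→∞} x(t) ≤ −d/b + (d/b + x̄) e^{b τ̄}`, where
`x̄ = (b + √(b² + 4ad))/(2a)`. -/
theorem limsup_le_of_delay_ineq_explicit_continuous
    (a b d t₀ τbar : ℝ) (τ x x' : ℝ → ℝ)
    (ha : 0 < a) (hd : 0 < d) (hb : 0 < b) (hτbar : 0 ≤ τbar)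
    (hτcont : Continuous τ) (hτ : ∀ t : ℝ, 0 ≤ τ t ∧ τ t ≤ τbar)
    (hxcont : ContinuousOn x (Set.Ici (t₀ - τbar)))
    (hxpos : ∀ t : ℝ, t₀ - τbar ≤ t → 0 < x t)
    (hderiv : ∀ t : ℝ, t₀ ≤ t → HasDerivAt x (x' t) t)
    (hineq : ∀ t : ℝ, t₀ ≤ t → x' t ≤ x t * (b - a * x (t - τ t)) + d) :
    Filter.limsup (fun t : ℝ => ((x t : EReal))) Filter.atTop ≤
      ((-d / b + (d / b + (b + Real.sqrt (b ^ 2 + 4 * a * d)) / (2 * a)) *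
        Real.exp (b * τbar) : ℝ) : EReal) :=
  limsup_le_of_delay_ineq_explicit_continuous_general a b d t₀ τbar τ x x' ha hd hb hτ hxpos hderiv
    hineq
end

section
/- Suppose a > 0, b ≥ 0, and x′(t) ≤ x(t)(b − a·x(t − τ(t))) for all t ≥ t₀. Then limsup_{t→+∞} x(t) ≤ (b/a)·e^{b·τ̄}. (Continuous-time case of Lemma 2.15(i) with d = 0.) -/
/-!
As `x > 0`, the inequality gives `x' ≤ b x`, so by Grönwall `x` grows at most by the factor
`e^{b τ̄}` across one delay: `x(t - τ(t)) ≥ e^{-b τ̄} x(t)` once `t ≥ t₀ + τ̄`. Hence `x` satisfies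
the logistic inequality `x' ≤ x (b - c x)` with `c = a e^{-b τ̄}`. Above any level `L > b / c` its
right side is at most `-L (c L - b) < 0`, so `x` drops below `L` in finite time and never
crosses it again.
-/

open Filter Set Real

section Fencing

variable {f f' : ℝ → ℝ} {T L δ : ℝ}

theorem le_mul_exp_of_deriv_right_le_mul {b s t : ℝ} (hst : s ≤ t)
    (hf : ContinuousOn f (Icc s t)) (hf' : ∀ u ∈ Ico s t, HasDerivWithinAt f (f' u) (Ici u) u)
    (bound : ∀ u ∈ Ico s t, f' u ≤ b * f u) :
    f t ≤ f s * exp (b * (t - s)) := by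
  have h := le_gronwallBound_of_liminf_deriv_right_le hf
    (fun u hu _ hr => (hf' u hu).liminf_right_slope_le hr) le_rfl
    (fun u hu => (bound u hu).trans_eq (add_zero _).symm) t ⟨hst, le_rfl⟩
  rwa [gronwallBound_ε0] at h

theorem exists_le_of_deriv_le_neg (hf : ∀ t ≥ T, HasDerivAt f (f' t) t) (hδ : 0 < δ)
    (h : ∀ t ≥ T, L ≤ f t → f' t ≤ -δ) : ∃ t ≥ T, f t ≤ L := by
  by_contra! hgt
  -- Descending at rate `δ`, `f` would reach `L` by time `t`.
  set t := T + (f T - L) / δ with ht_def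
  have hTt : T ≤ t := le_add_of_nonneg_right (div_nonneg (sub_nonneg.2 (hgt T le_rfl).le) hδ.le)
  have hft : f t ≤ f T - δ * (t - T) :=
    image_le_of_deriv_right_le_deriv_boundary (B := fun s => f T - δ * (s - T)) (B' := fun _ => -δ)
      (fun u hu => (hf u hu.1).continuousAt.continuousWithinAt)
      (fun u hu => (hf u hu.1).hasDerivWithinAt) (by simp) (by fun_prop)
      (fun u _ => by
        simpa using
          (((hasDerivAt_id u).sub_const T).const_mul δ |>.const_sub (f T)).hasDerivWithinAt)
      (fun u hu => h u hu.1 (hgt u hu.1).le) ⟨hTt, le_rfl⟩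
  have hdrop : δ * (t - T) = f T - L := by rw [ht_def]; field_simp; ring
  linarith [hgt t hTt]

theorem eventually_le_of_deriv_le_neg (hf : ∀ t ≥ T, HasDerivAt f (f' t) t) (hδ : 0 < δ)
    (h : ∀ t ≥ T, L ≤ f t → f' t ≤ -δ) : ∀ᶠ t in atTop, f t ≤ L := by
  obtain ⟨t₁, hTt₁, hft₁⟩ := exists_le_of_deriv_le_neg hf hδ h
  filter_upwards [eventually_ge_atTop t₁] with t ht
  exact image_le_of_deriv_right_lt_deriv_boundary (B := fun _ => L) (B' := 0)
    (fun u hu => (hf u (hTt₁.trans hu.1)).continuousAt.continuousWithinAt)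
    (fun u hu => (hf u (hTt₁.trans hu.1)).hasDerivWithinAt) hft₁
    (fun _ => hasDerivAt_const _ _)
    (fun u hu hfu => (h u (hTt₁.trans hu.1) hfu.ge).trans_lt (neg_neg_of_pos hδ)) ⟨ht, le_rfl⟩

end Fencing

section Logistic

variable {x x' : ℝ → ℝ} {b c T : ℝ}

theorem eventually_le_of_deriv_le_mul_sub_mul {L : ℝ} (hc : 0 ≤ c) (hL : 0 < L)
    (hbL : b < c * L) (hx : ∀ t ≥ T, HasDerivAt x (x' t) t)
    (hineq : ∀ t ≥ T, x' t ≤ x t * (b - c * x t)) : ∀ᶠ t in atTop, x t ≤ L :=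
  eventually_le_of_deriv_le_neg hx (mul_pos hL (sub_pos.2 hbL)) fun t ht hLx =>
    (hineq t ht).trans (by nlinarith [mul_le_mul_of_nonneg_left hLx hc])

theorem limsup_le_div_of_deriv_le_mul_sub_mul (hb : 0 ≤ b) (hc : 0 < c)
    (hx : ∀ t ≥ T, HasDerivAt x (x' t) t) (hineq : ∀ t ≥ T, x' t ≤ x t * (b - c * x t)) :
    limsup (fun t => (x t : EReal)) atTop ≤ ((b / c : ℝ) : EReal) := by
  rw [limsup_le_iff]
  intro y hy
  obtain ⟨r, hbr, hry⟩ := EReal.lt_iff_exists_real_btwn.1 hy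
  have hr : b / c < r := EReal.coe_lt_coe_iff.1 hbr
  have hbr' : b < c * r := by rwa [div_lt_iff₀ hc, mul_comm] at hr
  filter_upwards [eventually_le_of_deriv_le_mul_sub_mul hc.le
    ((div_nonneg hb hc.le).trans_lt hr) hbr' hx hineq] with t ht
  exact (EReal.coe_le_coe_iff.2 ht).trans_lt hry

end Logistic

section Delay

variable {a b t₀ τbar : ℝ} {τ x x' : ℝ → ℝ}

theorem deriv_le_mul_of_delay_ineq (ha : 0 < a) (hτ : ∀ t : ℝ, 0 ≤ τ t ∧ τ t ≤ τbar)
    (hxpos : ∀ t : ℝ, t₀ - τbar ≤ t → 0 < x t)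
    (hineq : ∀ t : ℝ, t₀ ≤ t → x' t ≤ x t * (b - a * x (t - τ t))) {t : ℝ} (ht : t₀ ≤ t) :
    x' t ≤ b * x t := by
  have hx : 0 < x t := hxpos t (by linarith [hτ t])
  have hxτ : 0 < x (t - τ t) := hxpos _ (by linarith [hτ t])
  nlinarith [hineq t ht, mul_pos (mul_pos ha hx) hxτ]

theorem exp_neg_mul_le_delayed (ha : 0 < a) (hb : 0 ≤ b) (hτ : ∀ t : ℝ, 0 ≤ τ t ∧ τ t ≤ τbar)
    (hxpos : ∀ t : ℝ, t₀ - τbar ≤ t → 0 < x t)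
    (hderiv : ∀ t : ℝ, t₀ ≤ t → HasDerivAt x (x' t) t)
    (hineq : ∀ t : ℝ, t₀ ≤ t → x' t ≤ x t * (b - a * x (t - τ t))) {t : ℝ}
    (ht : t₀ + τbar ≤ t) :
    exp (-(b * τbar)) * x t ≤ x (t - τ t) := by
  obtain ⟨hτ₀, hτbar⟩ := hτ t
  have hs : t₀ ≤ t - τ t := by linarith
  have hgrowth : x t ≤ x (t - τ t) * exp (b * τ t) := by
    simpa using le_mul_exp_of_deriv_right_le_mul (sub_le_self t hτ₀)
      (fun u hu => (hderiv u (hs.trans hu.1)).continuousAt.continuousWithinAt)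
      (fun u hu => (hderiv u (hs.trans hu.1)).hasDerivWithinAt)
      (fun u hu => deriv_le_mul_of_delay_ineq ha hτ hxpos hineq (hs.trans hu.1))
  calc exp (-(b * τbar)) * x t
      ≤ exp (-(b * τbar)) * (x (t - τ t) * exp (b * τbar)) := by
        gcongr
        exact hgrowth.trans (by gcongr; exact (hxpos _ (by linarith)).le)
    _ = x (t - τ t) := by rw [mul_comm, mul_assoc, ← exp_add]; simp

end Delay

theorem limsup_le_of_delay_ineq_explicit_continuous_d_zero_general
    (a b t₀ τbar : ℝ) (τ x x' : ℝ → ℝ)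
    (ha : 0 < a) (hb : 0 ≤ b)
    (hτ : ∀ t : ℝ, 0 ≤ τ t ∧ τ t ≤ τbar)
    (hxpos : ∀ t : ℝ, t₀ - τbar ≤ t → 0 < x t)
    (hderiv : ∀ t : ℝ, t₀ ≤ t → HasDerivAt x (x' t) t)
    (hineq : ∀ t : ℝ, t₀ ≤ t → x' t ≤ x t * (b - a * x (t - τ t))) :
    Filter.limsup (fun t : ℝ => ((x t : EReal))) Filter.atTop ≤
      ((b / a * Real.exp (b * τbar) : ℝ) : EReal) := by
  have hτbar : 0 ≤ τbar := (hτ 0).1.trans (hτ 0).2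
  have hlogistic : ∀ t ≥ t₀ + τbar, x' t ≤ x t * (b - a * exp (-(b * τbar)) * x t) :=
    fun t ht => (hineq t (by linarith)).trans <| mul_le_mul_of_nonneg_left
      (by nlinarith [exp_neg_mul_le_delayed ha hb hτ hxpos hderiv hineq ht])
      (hxpos t (by linarith)).le
  have hM : b / (a * exp (-(b * τbar))) = b / a * exp (b * τbar) := by
    rw [exp_neg]; field_simp
  simpa only [hM] using limsup_le_div_of_deriv_le_mul_sub_mul hb (by positivity)
    (fun t ht => hderiv t (by linarith)) hlogistic

/-- Continuous-time case of Lemma 2.15(i) with `d = 0`: if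
`x′(t) ≤ x(t)(b − a x(t − τ(t)))` for `t ≥ t₀`, then
`limsup_{t→∞} x(t) ≤ (b/a) e^{b τ̄}`. -/
theorem limsup_le_of_delay_ineq_explicit_continuous_d_zero
    (a b t₀ τbar : ℝ) (τ x x' : ℝ → ℝ)
    (ha : 0 < a) (hb : 0 ≤ b) (hτbar : 0 ≤ τbar)
    (hτcont : Continuous τ) (hτ : ∀ t : ℝ, 0 ≤ τ t ∧ τ t ≤ τbar)
    (hxcont : ContinuousOn x (Set.Ici (t₀ - τbar)))
    (hxpos : ∀ t : ℝ, t₀ - τbar ≤ t → 0 < x t)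
    (hderiv : ∀ t : ℝ, t₀ ≤ t → HasDerivAt x (x' t) t)
    (hineq : ∀ t : ℝ, t₀ ≤ t → x' t ≤ x t * (b - a * x (t - τ t))) :
    Filter.limsup (fun t : ℝ => ((x t : EReal))) Filter.atTop ≤
      ((b / a * Real.exp (b * τbar) : ℝ) : EReal) :=
  limsup_le_of_delay_ineq_explicit_continuous_d_zero_general a b t₀ τbar τ x x' ha hb hτ hxpos
    hderiv hineq
end

section
/- Suppose a > 0, d > 0, b ≥ 0, x′(t) ≥ x(t)(b − a·x(t − τ(t))) + d for all t ≥ t₀, and there is a constant N > 0 with limsup_{t→+∞} x(t) ≤ N. Then liminf_{t→+∞} x(t) ≥ (b/a)·e^{−a·N·τ̄}. (Continuous-time case of Lemma 2.15(ii) / Lemma 2.14(ii).) -/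
/-!
Fix `M > N`, so that eventually `x ≤ M`, and put `K = exp (a M τ̄)`. Once the delayed argument
has also entered the region `x ≤ M`, the inequality gives `x' ≥ -a M x`, so `x t · exp (a M t)` is
nondecreasing and the delayed value is controlled by the present one: `x (t - τ t) ≤ K x t`.
This turns the delay inequality into the logistic one `x' ≥ x (b - a K x) + d`. Below the level
`b / (a K)` the right-hand side is at least `d > 0`, so `x` climbs above that level in finite
time and can never cross it downwards again; hence `liminf x ≥ b / (a K) = (b / a) exp (-a M τ̄)`.
Letting `M ↓ N` gives the claim.
-/

open Filter Set Topology Real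

lemma monotoneOn_Ici_of_hasDerivAt_nonneg {f f' : ℝ → ℝ} {T : ℝ}
    (hf : ∀ t ∈ Ici T, HasDerivAt f (f' t) t) (hf' : ∀ t ∈ Ici T, 0 ≤ f' t) :
    MonotoneOn f (Ici T) :=
  monotoneOn_of_hasDerivWithinAt_nonneg (convex_Ici T)
    (fun t ht => (hf t ht).continuousAt.continuousWithinAt)
    (fun t ht => (hf t (interior_subset ht)).hasDerivWithinAt)
    (fun t ht => hf' t (interior_subset ht))

lemma monotoneOn_mul_exp_of_neg_mul_le_deriv {x x' : ℝ → ℝ} {k T : ℝ}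
    (hx : ∀ t ∈ Ici T, HasDerivAt x (x' t) t) (hx' : ∀ t ∈ Ici T, -k * x t ≤ x' t) :
    MonotoneOn (fun t => x t * exp (k * t)) (Ici T) := by
  refine monotoneOn_Ici_of_hasDerivAt_nonneg
    (fun t ht => (hx t ht).mul ((hasDerivAt_id' t).const_mul k).exp) fun t ht => ?_
  have hxt := hx' t ht
  have hexp := exp_pos (k * t)
  nlinarith

lemma le_of_le_of_deriv_pos_of_eq {x x' : ℝ → ℝ} {c T : ℝ}
    (hx : ∀ t ∈ Ici T, HasDerivAt x (x' t) t) (hT : c ≤ x T)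
    (hx' : ∀ t ∈ Ici T, x t = c → 0 < x' t) : ∀ t ∈ Ici T, c ≤ x t := by
  intro t ht
  have hIcc : Icc T t ⊆ Ici T := Icc_subset_Ici_self
  have key := image_le_of_deriv_right_lt_deriv_boundary' (f := fun s => -x s) (f' := fun s => -x' s)
    (B := fun _ => -c) (B' := fun _ => 0)
    (fun s hs => (hx s (hIcc hs)).continuousAt.neg.continuousWithinAt)
    (fun s hs => (hx s (hIcc (Ico_subset_Icc_self hs))).neg.hasDerivWithinAt)
    (neg_le_neg hT) continuousOn_const (fun _ _ => hasDerivWithinAt_const _ _ _)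
    (fun s hs hs' => neg_neg_of_pos (hx' s (hIcc (Ico_subset_Icc_self hs)) (neg_inj.mp hs')))
    ⟨ht, le_rfl⟩
  exact neg_le_neg_iff.mp key

lemma exists_le_of_deriv_ge_of_le {x x' : ℝ → ℝ} {c d T : ℝ} (hd : 0 < d)
    (hx : ∀ t ∈ Ici T, HasDerivAt x (x' t) t) (hx' : ∀ t ∈ Ici T, x t ≤ c → d ≤ x' t) :
    ∃ t ∈ Ici T, c ≤ x t := by
  by_contra! hlt
  have hmono : MonotoneOn (fun t => x t - d * t) (Ici T) :=
    monotoneOn_Ici_of_hasDerivAt_nonneg (fun t ht => (hx t ht).sub ((hasDerivAt_id t).const_mul d))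
      fun t ht => by simpa using hx' t ht (hlt t ht).le
  set t := T + (c - x T) / d
  have hTt : T ≤ t :=
    le_add_of_nonneg_right (div_nonneg (sub_nonneg.mpr (hlt T self_mem_Ici).le) hd.le)
  have hclimb : d * (t - T) = c - x T := by
    rw [add_sub_cancel_left, mul_div_cancel₀ _ hd.ne']
  linarith [hmono self_mem_Ici hTt hTt, hlt t hTt]

lemma eventually_le_of_deriv_ge_of_le {x x' : ℝ → ℝ} {c d : ℝ} (hd : 0 < d)
    (hx : ∀ᶠ t in atTop, HasDerivAt x (x' t) t) (hx' : ∀ᶠ t in atTop, x t ≤ c → d ≤ x' t) :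
    ∀ᶠ t in atTop, c ≤ x t := by
  obtain ⟨T, hT⟩ := eventually_atTop.mp (hx.and hx')
  obtain ⟨t₁, ht₁, hc⟩ := exists_le_of_deriv_ge_of_le hd (fun t ht => (hT t ht).1)
    fun t ht => (hT t ht).2
  refine eventually_atTop.mpr ⟨t₁, le_of_le_of_deriv_pos_of_eq
    (fun t ht => (hT t (ht₁.trans ht)).1) hc fun t ht hxt => ?_⟩
  exact hd.trans_le ((hT t (ht₁.trans ht)).2 hxt.le)

lemma eventually_div_le_of_logistic_ineq {x x' : ℝ → ℝ} {b k d : ℝ} (hk : 0 < k) (hd : 0 < d)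
    (hx : ∀ᶠ t in atTop, HasDerivAt x (x' t) t) (hpos : ∀ᶠ t in atTop, 0 ≤ x t)
    (hineq : ∀ᶠ t in atTop, x t * (b - k * x t) + d ≤ x' t) :
    ∀ᶠ t in atTop, b / k ≤ x t := by
  refine eventually_le_of_deriv_ge_of_le hd hx ?_
  filter_upwards [hpos, hineq] with t hxt hineqt hle
  have : k * x t ≤ b := (le_div_iff₀' hk).mp hle
  nlinarith

lemma tendsto_sub_atTop_of_le {τ : ℝ → ℝ} {τbar : ℝ} (hτ : ∀ t, τ t ≤ τbar) :
    Tendsto (fun t => t - τ t) atTop atTop :=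
  tendsto_atTop_mono (f := fun t => t + -τbar) (fun t => by linarith [hτ t])
    (tendsto_atTop_add_const_right _ _ tendsto_id)

lemma eventually_delay_le_exp_mul {x x' τ : ℝ → ℝ} {k τbar : ℝ} (hk : 0 ≤ k)
    (hτ : ∀ t, 0 ≤ τ t ∧ τ t ≤ τbar) (hx : ∀ᶠ t in atTop, HasDerivAt x (x' t) t)
    (hpos : ∀ᶠ t in atTop, 0 ≤ x t) (hx' : ∀ᶠ t in atTop, -k * x t ≤ x' t) :
    ∀ᶠ t in atTop, x (t - τ t) ≤ exp (k * τbar) * x t := by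
  obtain ⟨T, hT⟩ := eventually_atTop.mp (hx.and hx')
  have hmono := monotoneOn_mul_exp_of_neg_mul_le_deriv (fun t ht => (hT t ht).1)
    fun t ht => (hT t ht).2
  filter_upwards [(tendsto_sub_atTop_of_le fun t => (hτ t).2).eventually_ge_atTop T,
    eventually_ge_atTop T, hpos] with t hs ht hxt
  have hst : t - τ t ≤ t := sub_le_self _ (hτ t).1
  have hweighted : x (t - τ t) * exp (k * (t - τ t)) ≤ x t * exp (k * t) := hmono hs ht hst
  calc x (t - τ t) ≤ x t * exp (k * τ t) := by
        have hsplit : exp (k * t) = exp (k * τ t) * exp (k * (t - τ t)) := by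
          rw [← exp_add]; ring_nf
        rw [hsplit, ← mul_assoc] at hweighted
        exact le_of_mul_le_mul_right hweighted (exp_pos _)
    _ ≤ exp (k * τbar) * x t := by
        rw [mul_comm]
        gcongr
        exact (hτ t).2

lemma eventually_le_of_delay_ineq {x x' τ : ℝ → ℝ} {a b d τbar M : ℝ} (ha : 0 < a) (hb : 0 ≤ b)
    (hd : 0 < d) (hτ : ∀ t, 0 ≤ τ t ∧ τ t ≤ τbar) (hx : ∀ᶠ t in atTop, HasDerivAt x (x' t) t)
    (hpos : ∀ᶠ t in atTop, 0 < x t)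
    (hineq : ∀ᶠ t in atTop, x t * (b - a * x (t - τ t)) + d ≤ x' t)
    (hM : ∀ᶠ t in atTop, x t ≤ M) :
    ∀ᶠ t in atTop, b / a * exp (-(a * M * τbar)) ≤ x t := by
  have hM₀ : 0 ≤ M := by
    obtain ⟨t, hxt, hxM⟩ := (hpos.and hM).exists
    linarith
  have hdelayM : ∀ᶠ t in atTop, x (t - τ t) ≤ M := (tendsto_sub_atTop_of_le fun t => (hτ t).2) hM
  have hdecay : ∀ᶠ t in atTop, -(a * M) * x t ≤ x' t := by
    filter_upwards [hpos, hineq, hdelayM] with t hxt hineqt hdelayt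
    nlinarith [mul_le_mul_of_nonneg_left hdelayt ha.le]
  set K := exp (a * M * τbar)
  have hdelayK : ∀ᶠ t in atTop, x (t - τ t) ≤ K * x t :=
    eventually_delay_le_exp_mul (by positivity) hτ hx (hpos.mono fun _ h => h.le) hdecay
  have hlogistic : ∀ᶠ t in atTop, x t * (b - a * K * x t) + d ≤ x' t := by
    filter_upwards [hpos, hineq, hdelayK] with t hxt hineqt hdelayt
    nlinarith [mul_le_mul_of_nonneg_left hdelayt ha.le]
  have hbound := eventually_div_le_of_logistic_ineq (by positivity) hd hx
    (hpos.mono fun _ h => h.le) hlogistic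
  have hK : b / a * exp (-(a * M * τbar)) = b / (a * K) := by
    rw [exp_neg, div_mul_eq_div_div, ← div_eq_mul_inv]
  simpa only [hK] using hbound

theorem liminf_ge_of_delay_ineq_continuous_general
    (a b d t₀ τbar N : ℝ) (τ x x' : ℝ → ℝ)
    (ha : 0 < a) (hd : 0 < d) (hb : 0 ≤ b)
    (hτ : ∀ t : ℝ, 0 ≤ τ t ∧ τ t ≤ τbar)
    (hxpos : ∀ t : ℝ, t₀ - τbar ≤ t → 0 < x t)
    (hderiv : ∀ t : ℝ, t₀ ≤ t → HasDerivAt x (x' t) t)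
    (hineq : ∀ t : ℝ, t₀ ≤ t → x' t ≥ x t * (b - a * x (t - τ t)) + d)
    (hbound : Filter.limsup (fun t : ℝ => ((x t : EReal))) Filter.atTop ≤ ((N : ℝ) : EReal)) :
    ((b / a * Real.exp (-(a * N * τbar)) : ℝ) : EReal) ≤
      Filter.liminf (fun t : ℝ => ((x t : EReal))) Filter.atTop := by
  have hbelow : ∀ M > N, ((b / a * exp (-(a * M * τbar)) : ℝ) : EReal) ≤
      liminf (fun t => (x t : EReal)) atTop := by
    intro M hM
    have hxM : ∀ᶠ t in atTop, x t ≤ M := by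
      filter_upwards [eventually_lt_of_limsup_lt (hbound.trans_lt (EReal.coe_lt_coe_iff.mpr hM))]
        with t ht using (EReal.coe_lt_coe_iff.mp ht).le
    refine le_liminf_of_le (h := ?_)
    filter_upwards [eventually_le_of_delay_ineq ha hb hd hτ (eventually_ge_atTop t₀ |>.mono hderiv)
      (eventually_ge_atTop (t₀ - τbar) |>.mono hxpos) (eventually_ge_atTop t₀ |>.mono hineq) hxM]
      with t ht using EReal.coe_le_coe_iff.mpr ht
  have hcont : Continuous fun M : ℝ => ((b / a * exp (-(a * M * τbar)) : ℝ) : EReal) :=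
    continuous_coe_real_ereal.comp (by fun_prop)
  exact le_of_tendsto ((hcont.tendsto N).mono_left nhdsWithin_le_nhds)
    (eventually_nhdsWithin_of_forall (s := Ioi N) hbelow)

/-- Continuous-time case of Lemma 2.15(ii)/2.14(ii): if
`x′(t) ≥ x(t)(b − a x(t − τ(t))) + d` for `t ≥ t₀` and `limsup_{t→∞} x(t) ≤ N`,
then `liminf_{t→∞} x(t) ≥ (b/a) e^{−a N τ̄}`. -/
theorem liminf_ge_of_delay_ineq_continuous
    (a b d t₀ τbar N : ℝ) (τ x x' : ℝ → ℝ)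
    (ha : 0 < a) (hd : 0 < d) (hb : 0 ≤ b) (hτbar : 0 ≤ τbar)
    (hτcont : Continuous τ) (hτ : ∀ t : ℝ, 0 ≤ τ t ∧ τ t ≤ τbar)
    (hxcont : ContinuousOn x (Set.Ici (t₀ - τbar)))
    (hxpos : ∀ t : ℝ, t₀ - τbar ≤ t → 0 < x t)
    (hderiv : ∀ t : ℝ, t₀ ≤ t → HasDerivAt x (x' t) t)
    (hineq : ∀ t : ℝ, t₀ ≤ t → x' t ≥ x t * (b - a * x (t - τ t)) + d)
    (hN : 0 < N)
    (hbound : Filter.limsup (fun t : ℝ => ((x t : EReal))) Filter.atTop ≤ ((N : ℝ) : EReal)) :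
    ((b / a * Real.exp (-(a * N * τbar)) : ℝ) : EReal) ≤
      Filter.liminf (fun t : ℝ => ((x t : EReal))) Filter.atTop :=
  liminf_ge_of_delay_ineq_continuous_general a b d t₀ τbar N τ x x' ha hd hb hτ hxpos hderiv hineq
    hbound
end

section
/- Suppose a > 0, 0 < b < 1, and x(k+1) − x(k) ≤ x(k+1)·(b − a·x(k − τ(k))) for all integers k ≥ k₀. Then limsup_{k→+∞} x(k) ≤ (b/a)·(1 − b)^{−τ̄}. (Discrete case, 𝕋 = ℤ, of Lemma 2.14(i) with d = 0.) -/
open Filter Topology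

/-!
Dropping the delay term gives `(1 - b) x(k+1) ≤ x(k)`, so over a window of length at most `τ̄`
the sequence shrinks by at most the factor `q = (1 - b)^τ̄`, i.e. `x(k - τ(k)) ≥ q x(k)`.
Substituting this, the reciprocals `z = 1/x` satisfy the linear recurrence inequality
`z(k+1) ≥ (1 - b) z(k) + a q`, whose solutions eventually exceed every number below its fixed
point `a q / b`. Hence `limsup x ≤ b / (a q)`.
-/

theorem pow_mul_le_of_mul_succ_le {x : ℤ → ℝ} {c : ℝ} {k₀ : ℤ} (hc : 0 ≤ c)
    (h : ∀ k ≥ k₀, c * x (k + 1) ≤ x k) {k : ℤ} (hk : k₀ ≤ k) (n : ℕ) :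
    c ^ n * x (k + n) ≤ x k := by
  induction n with
  | zero => simp
  | succ n ih =>
    calc c ^ (n + 1) * x (k + (n + 1 : ℕ)) = c ^ n * (c * x (k + n + 1)) := by
          rw [pow_succ, Nat.cast_succ, ← add_assoc, mul_assoc]
      _ ≤ c ^ n * x (k + n) := mul_le_mul_of_nonneg_left (h _ (by omega)) (pow_nonneg hc n)
      _ ≤ x k := ih

theorem eventually_lt_of_mul_add_le_succ {z : ℤ → ℝ} {c d r : ℝ} {N : ℤ} (hc₀ : 0 ≤ c)
    (hc₁ : c < 1) (h : ∀ k ≥ N, c * z k + d ≤ z (k + 1)) (hr : r < d / (1 - c)) :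
    ∀ᶠ k in atTop, r < z k := by
  have hfix : c * (d / (1 - c)) + d = d / (1 - c) := by
    have : 1 - c ≠ 0 := by linarith
    field_simp; ring
  set z' := d / (1 - c)
  have hgeom (n : ℕ) : z' - z (N + n) ≤ c ^ n * (z' - z N) := by
    simpa using le_geom (u := fun n : ℕ => z' - z (N + n)) hc₀ n fun k _ => by
      have := h (N + k) (by omega)
      push_cast
      rw [← add_assoc]
      linarith
  have hlim : Tendsto (fun k : ℤ => c ^ (k - N).toNat * (z' - z N)) atTop (𝓝 0) := by
    simpa using ((tendsto_pow_atTop_nhds_zero_of_lt_one hc₀ hc₁).comp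
      (tendsto_atTop_atTop.2 fun n => ⟨N + n, fun k hk => by omega⟩)).mul_const (z' - z N)
  filter_upwards [hlim.eventually (gt_mem_nhds (sub_pos.2 hr)), eventually_ge_atTop N]
    with k hk hkN
  have := hgeom (k - N).toNat
  rw [show N + ((k - N).toNat : ℤ) = k by omega] at this
  linarith

theorem EReal.limsup_coe_le_of_forall_eventually_lt {ι : Type*} {f : Filter ι} {u : ι → ℝ}
    {M : ℝ} (h : ∀ r, M < r → ∀ᶠ i in f, u i < r) :
    limsup (fun i => (u i : EReal)) f ≤ M := by
  refine (limsup_le_iff).2 fun y hy => ?_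
  obtain ⟨r, hMr, hry⟩ := EReal.lt_iff_exists_real_btwn.1 hy
  filter_upwards [h r (EReal.coe_lt_coe_iff.1 hMr)] with i hi
  exact (EReal.coe_lt_coe hi).trans hry

theorem mul_inv_add_le_inv_of_mul_le {u v c d : ℝ} (hu : 0 < u) (hv : 0 < v)
    (h : v * (c + d * u) ≤ u) : c * u⁻¹ + d ≤ v⁻¹ := by
  rw [show c * u⁻¹ + d = (c + d * u) / u by field_simp, div_le_iff₀ hu, ← div_eq_inv_mul,
    le_div_iff₀' hv]
  exact h

/-- Discrete case (𝕋 = ℤ) of Lemma 2.14(i) with `d = 0`: if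
`x(k+1) − x(k) ≤ x(k+1)(b − a x(k − τ(k)))` for `k ≥ k₀`, then
`limsup_{k→∞} x(k) ≤ (b/a)(1 − b)^{−τ̄}`. -/
theorem limsup_le_of_delay_ineq_implicit_discrete_d_zero
    (a b : ℝ) (k₀ : ℤ) (τbar : ℕ) (τ : ℤ → ℕ) (x : ℤ → ℝ)
    (ha : 0 < a) (hb0 : 0 < b) (hb1 : b < 1)
    (hτ : ∀ k : ℤ, τ k ≤ τbar)
    (hxpos : ∀ k : ℤ, k₀ - (τbar : ℤ) ≤ k → 0 < x k)
    (hineq : ∀ k : ℤ, k₀ ≤ k →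
      x (k + 1) - x k ≤ x (k + 1) * (b - a * x (k - (τ k : ℤ)))) :
    Filter.limsup (fun k : ℤ => ((x k : EReal))) Filter.atTop ≤
      ((b / a * (1 - b) ^ (-(τbar : ℤ)) : ℝ) : EReal) := by
  have hx : ∀ k ≥ k₀, 0 < x k := fun k hk => hxpos k (by omega)
  have hx_delay : ∀ k ≥ k₀, 0 < x (k - τ k) := fun k hk => hxpos _ (by have := hτ k; omega)
  have hdecay : ∀ k ≥ k₀, (1 - b) * x (k + 1) ≤ x k := fun k hk => by
    nlinarith [hineq k hk, mul_pos (mul_pos ha (hx (k + 1) (by omega))) (hx_delay k hk)]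
  have hdelay : ∀ k ≥ k₀ + τbar, (1 - b) ^ τbar * x k ≤ x (k - τ k) := fun k hk =>
    calc (1 - b) ^ τbar * x k ≤ (1 - b) ^ τ k * x (k - τ k + τ k) := by
          rw [sub_add_cancel]
          exact mul_le_mul_of_nonneg_right (pow_le_pow_of_le_one (by linarith) (by linarith)
            (hτ k)) (hx k (by omega)).le
      _ ≤ x (k - τ k) :=
          pow_mul_le_of_mul_succ_le (by linarith) hdecay (by have := hτ k; omega) _
  have hrec : ∀ k ≥ k₀ + τbar, (1 - b) * (x k)⁻¹ + a * (1 - b) ^ τbar ≤ (x (k + 1))⁻¹ :=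
    fun k hk => mul_inv_add_le_inv_of_mul_le (hx k (by omega)) (hx (k + 1) (by omega)) <| by
      nlinarith [hineq k (by omega), mul_le_mul_of_nonneg_left (hdelay k hk)
        (mul_pos ha (hx (k + 1) (by omega))).le]
  have hM : (b / a * (1 - b) ^ (-(τbar : ℤ)))⁻¹ = a * (1 - b) ^ τbar / (1 - (1 - b)) := by
    rw [zpow_neg, zpow_natCast, sub_sub_cancel]
    field_simp
  refine EReal.limsup_coe_le_of_forall_eventually_lt fun r hr => ?_
  have hM0 : 0 < b / a * (1 - b) ^ (-(τbar : ℤ)) := by positivity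
  filter_upwards [eventually_lt_of_mul_add_le_succ (z := fun k => (x k)⁻¹) (r := r⁻¹)
    (by linarith) (by linarith) hrec (hM ▸ inv_strictAnti₀ hM0 hr), eventually_ge_atTop k₀]
    with k hk hk₀
  exact (inv_lt_inv₀ (hM0.trans hr) (hx k hk₀)).1 hk
end

section
/- Suppose a > 0, d > 0, 0 ≤ b < 1, x(k+1) − x(k) ≥ x(k+1)·(b − a·x(k − τ(k))) + d for all integers k ≥ k₀, and there is a constant N > 0 with limsup_{k→+∞} x(k) ≤ N. Then liminf_{k→+∞} x(k) ≥ (b/a)·e^{−a·N·τ̄}. (Discrete case, 𝕋 = ℤ, of Lemma 2.14(ii).) -/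
/-!
Fix `M > N`, so that eventually `x ≤ M`, and put `L = (b/a) e^{-aMτ̄}`. The inequality gives
`x(k) ≤ x(k+1)(1 + aM) ≤ x(k+1) e^{aM}`, so across a delay `x(k) ≥ x(k - τ(k)) e^{-aMτ̄}`.
At a step where `x` does not increase, the inequality (with `b ≤ 1`) gives
`b x(k) ≤ a x(k+1) x(k - τ(k))`, and with the previous bound `x(k+1) ≥ L`: so once `x ≥ L`, it
stays so. And `x` cannot stay below `L ≤ b/a` forever, since then it grows by at least `d` at
each step. Hence `liminf x ≥ L`, and we let `M ↓ N`.
-/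

open Filter Real

lemma mul_pow_le_of_forall_mul_le_succ {x : ℤ → ℝ} {r : ℝ} {K : ℤ} (hr : 0 ≤ r)
    (h : ∀ j ≥ K, x j * r ≤ x (j + 1)) {j : ℤ} (hj : K ≤ j) :
    ∀ n : ℕ, x j * r ^ n ≤ x (j + n)
  | 0 => by simp
  | n + 1 =>
    calc x j * r ^ (n + 1) = x j * r ^ n * r := by ring
      _ ≤ x (j + n) * r := mul_le_mul_of_nonneg_right (mul_pow_le_of_forall_mul_le_succ hr h hj n) hr
      _ ≤ x (j + n + 1) := h _ (by omega)
      _ = x (j + (n + 1 : ℕ)) := by push_cast; ring_nf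

lemma exists_lt_of_forall_add_le_succ {x : ℤ → ℝ} {d : ℝ} {K : ℤ} (hd : 0 < d)
    (h : ∀ j ≥ K, x j + d ≤ x (j + 1)) (M : ℝ) : ∃ j ≥ K, M < x j := by
  have hgrow : ∀ n : ℕ, x K + n * d ≤ x (K + n) := by
    intro n
    induction n with
    | zero => simp
    | succ n ih =>
      have := h (K + n) (by omega)
      push_cast
      rw [← add_assoc]
      linarith
  obtain ⟨n, hn⟩ := exists_nat_gt ((M - x K) / d)
  refine ⟨K + n, by omega, ?_⟩
  have := hgrow n
  rw [div_lt_iff₀ hd] at hn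
  linarith

lemma le_of_le_of_forall_succ_le {x : ℤ → ℝ} {L : ℝ} {k₁ : ℤ} (h₁ : L ≤ x k₁)
    (hstep : ∀ k ≥ k₁, x (k + 1) ≤ x k → L ≤ x (k + 1)) : ∀ j ≥ k₁, L ≤ x j := by
  intro j hj
  induction j, hj using Int.leInduction with
  | base => exact h₁
  | succ k hk ih =>
    rcases le_or_gt (x (k + 1)) (x k) with hdec | hinc
    · exact hstep k hk hdec
    · exact ih.trans hinc.le

section DelayStep

variable {a b d u v y : ℝ}

lemma mul_exp_neg_le_of_delay_step {M : ℝ} (ha : 0 ≤ a) (hb : 0 ≤ b) (hd : 0 ≤ d) (hv : 0 ≤ v)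
    (hy : y ≤ M) (h : v * (b - a * y) + d ≤ v - u) : u * exp (-(a * M)) ≤ v := by
  have hexp : 1 - b + a * y ≤ exp (a * M) := by
    nlinarith [add_one_le_exp (a * M), mul_le_mul_of_nonneg_left hy ha]
  rw [exp_neg, mul_inv_le_iff₀ (exp_pos _)]
  nlinarith [mul_le_mul_of_nonneg_left hexp hv]

lemma mul_le_of_delay_step_of_le (hb : b ≤ 1) (hd : 0 ≤ d) (hvu : v ≤ u)
    (h : v * (b - a * y) + d ≤ v - u) : b * u ≤ a * v * y := by
  nlinarith [mul_nonneg (sub_nonneg.mpr hb) (sub_nonneg.mpr hvu)]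

lemma add_le_of_delay_step (hv : 0 ≤ v) (hy : a * y ≤ b) (h : v * (b - a * y) + d ≤ v - u) :
    u + d ≤ v := by
  nlinarith [mul_nonneg hv (sub_nonneg.mpr hy)]

end DelayStep

def DelayIneq (a b d : ℝ) (τ : ℤ → ℕ) (x : ℤ → ℝ) (K : ℤ) : Prop :=
  ∀ k ≥ K, x (k + 1) * (b - a * x (k - τ k)) + d ≤ x (k + 1) - x k

namespace DelayIneq

variable {a b d M : ℝ} {τbar : ℕ} {τ : ℤ → ℕ} {x : ℤ → ℝ} {K : ℤ}

lemma mul_exp_neg_le (hx : DelayIneq a b d τ x K) (ha : 0 ≤ a) (hb : 0 ≤ b) (hd : 0 ≤ d)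
    (hτ : ∀ k, τ k ≤ τbar) (hpos : ∀ j ≥ K, 0 < x j) (hM : ∀ j ≥ K, x j ≤ M)
    {j : ℤ} (hj : K + τbar ≤ j) (n : ℕ) : x j * exp (-(a * M * n)) ≤ x (j + n) := by
  have hstep : ∀ k ≥ K + τbar, x k * exp (-(a * M)) ≤ x (k + 1) := fun k hk =>
    mul_exp_neg_le_of_delay_step ha hb hd (hpos _ (by omega)).le
      (hM _ (by have := hτ k; omega)) (hx k (by omega))
  rw [show -(a * M * n) = n * -(a * M) by ring, exp_nat_mul]
  exact mul_pow_le_of_forall_mul_le_succ (exp_pos _).le hstep hj n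

lemma le_succ_of_succ_le (hx : DelayIneq a b d τ x K) (ha : 0 < a) (hb₀ : 0 ≤ b) (hb₁ : b ≤ 1)
    (hd : 0 ≤ d) (hτ : ∀ k, τ k ≤ τbar) (hpos : ∀ j ≥ K, 0 < x j) (hM : ∀ j ≥ K, x j ≤ M)
    {k : ℤ} (hk : K + 2 * τbar ≤ k) (hdec : x (k + 1) ≤ x k) :
    b / a * exp (-(a * M * τbar)) ≤ x (k + 1) := by
  have hτk := hτ k
  have hy : 0 < x (k - τ k) := hpos _ (by omega)
  have hM₀ : 0 ≤ M := (hpos K le_rfl).le.trans (hM K le_rfl)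
  have hdecay : x (k - τ k) * exp (-(a * M * τ k)) ≤ x k := by
    simpa using hx.mul_exp_neg_le ha.le hb₀ hd hτ hpos hM (j := k - τ k) (by omega) (τ k)
  have hbot := mul_le_of_delay_step_of_le hb₁ hd hdec (hx k (by omega))
  have hexp : exp (-(a * M * τbar)) ≤ exp (-(a * M * τ k)) := by
    have : (τ k : ℝ) ≤ τbar := by exact_mod_cast hτk
    exact exp_le_exp.mpr (by nlinarith [mul_nonneg ha.le hM₀])
  have hkey : b * exp (-(a * M * τ k)) ≤ a * x (k + 1) := by
    refine le_of_mul_le_mul_right ?_ hy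
    calc b * exp (-(a * M * τ k)) * x (k - τ k)
        = b * (x (k - τ k) * exp (-(a * M * τ k))) := by ring
      _ ≤ b * x k := mul_le_mul_of_nonneg_left hdecay hb₀
      _ ≤ a * x (k + 1) * x (k - τ k) := hbot
  rw [div_mul_eq_mul_div, div_le_iff₀ ha]
  nlinarith [mul_le_mul_of_nonneg_left hexp hb₀]

lemma exists_ge_le (hx : DelayIneq a b d τ x K) (ha : 0 < a) (hb : 0 ≤ b) (hd : 0 < d)
    (hτ : ∀ k, τ k ≤ τbar) (hpos : ∀ j ≥ K, 0 < x j) (hM : ∀ j ≥ K, x j ≤ M) (K' : ℤ) :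
    ∃ k ≥ K', b / a * exp (-(a * M * τbar)) ≤ x k := by
  by_contra! hlow
  have hM₀ : 0 ≤ M := (hpos K le_rfl).le.trans (hM K le_rfl)
  have hL : b / a * exp (-(a * M * τbar)) ≤ b / a :=
    mul_le_of_le_one_right (div_nonneg hb ha.le) (exp_le_one_iff.mpr (by
      have : 0 ≤ a * M * τbar := by positivity
      linarith))
  have hgrow : ∀ k ≥ max K' K + τbar, x k + d ≤ x (k + 1) := by
    intro k hk
    have hτk := hτ k
    have hy : a * x (k - τ k) ≤ b :=
      (le_div_iff₀' ha).mp ((hlow _ (by omega)).le.trans hL)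
    exact add_le_of_delay_step (hpos _ (by omega)).le hy (hx k (by omega))
  obtain ⟨j, hj, hMj⟩ := exists_lt_of_forall_add_le_succ hd hgrow M
  exact (hM j (by omega)).not_gt hMj

theorem eventually_le (hx : DelayIneq a b d τ x K) (ha : 0 < a) (hd : 0 < d) (hb₀ : 0 ≤ b)
    (hb₁ : b ≤ 1) (hτ : ∀ k, τ k ≤ τbar) (hpos : ∀ j ≥ K, 0 < x j) (hM : ∀ j ≥ K, x j ≤ M) :
    ∀ᶠ j in atTop, b / a * exp (-(a * M * τbar)) ≤ x j := by
  obtain ⟨k₁, hk₁, hL⟩ := hx.exists_ge_le ha hb₀ hd hτ hpos hM (K + 2 * τbar)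
  exact eventually_atTop.mpr ⟨k₁, le_of_le_of_forall_succ_le hL fun k hk hdec =>
    hx.le_succ_of_succ_le ha hb₀ hb₁ hd.le hτ hpos hM (by omega) hdec⟩

end DelayIneq

lemma EReal.coe_le_of_forall_gt {g : ℝ → ℝ} (hg : Continuous g) {N : ℝ} {z : EReal}
    (h : ∀ M > N, (g M : EReal) ≤ z) : (g N : EReal) ≤ z :=
  le_of_tendsto ((continuous_coe_real_ereal.comp hg).tendsto N |>.mono_left nhdsWithin_le_nhds)
    (eventually_nhdsWithin_of_forall (s := Set.Ioi N) h)

theorem liminf_ge_of_delay_ineq_implicit_discrete_general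
    (a b d N : ℝ) (k₀ : ℤ) (τbar : ℕ) (τ : ℤ → ℕ) (x : ℤ → ℝ)
    (ha : 0 < a) (hd : 0 < d) (hb0 : 0 ≤ b) (hb1 : b < 1)
    (hτ : ∀ k : ℤ, τ k ≤ τbar)
    (hxpos : ∀ k : ℤ, k₀ - (τbar : ℤ) ≤ k → 0 < x k)
    (hineq : ∀ k : ℤ, k₀ ≤ k →
      x (k + 1) - x k ≥ x (k + 1) * (b - a * x (k - (τ k : ℤ))) + d)
    (hbound : Filter.limsup (fun k : ℤ => ((x k : EReal))) Filter.atTop ≤ ((N : ℝ) : EReal)) :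
    ((b / a * Real.exp (-(a * N * (τbar : ℝ))) : ℝ) : EReal) ≤
      Filter.liminf (fun k : ℤ => ((x k : EReal))) Filter.atTop := by
  refine EReal.coe_le_of_forall_gt (g := fun M => b / a * exp (-(a * M * τbar)))
    (by fun_prop) fun M hM => ?_
  have hlt : ∀ᶠ k in atTop, (x k : EReal) < M :=
    eventually_lt_of_limsup_lt (hbound.trans_lt (EReal.coe_lt_coe_iff.mpr hM))
  obtain ⟨K, hK⟩ := eventually_atTop.mp hlt
  set K' := max K k₀
  have hx : DelayIneq a b d τ x K' := fun k hk => hineq k (le_of_max_le_right hk)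
  have hev := hx.eventually_le ha hd hb0 hb1.le hτ (fun j hj => hxpos j (by omega))
    (fun j hj => (EReal.coe_lt_coe_iff.mp (hK j (le_of_max_le_left hj))).le)
  exact le_liminf_of_le (by isBoundedDefault) (hev.mono fun j hj => EReal.coe_le_coe_iff.mpr hj)

/-- Discrete case (𝕋 = ℤ) of Lemma 2.14(ii): if
`x(k+1) − x(k) ≥ x(k+1)(b − a x(k − τ(k))) + d` for `k ≥ k₀` and
`limsup_{k→∞} x(k) ≤ N`, then `liminf_{k→∞} x(k) ≥ (b/a) e^{−a N τ̄}`. -/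
theorem liminf_ge_of_delay_ineq_implicit_discrete
    (a b d N : ℝ) (k₀ : ℤ) (τbar : ℕ) (τ : ℤ → ℕ) (x : ℤ → ℝ)
    (ha : 0 < a) (hd : 0 < d) (hb0 : 0 ≤ b) (hb1 : b < 1)
    (hτ : ∀ k : ℤ, τ k ≤ τbar)
    (hxpos : ∀ k : ℤ, k₀ - (τbar : ℤ) ≤ k → 0 < x k)
    (hineq : ∀ k : ℤ, k₀ ≤ k →
      x (k + 1) - x k ≥ x (k + 1) * (b - a * x (k - (τ k : ℤ))) + d)
    (hN : 0 < N)
    (hbound : Filter.limsup (fun k : ℤ => ((x k : EReal))) Filter.atTop ≤ ((N : ℝ) : EReal)) :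
    ((b / a * Real.exp (-(a * N * (τbar : ℝ))) : ℝ) : EReal) ≤
      Filter.liminf (fun k : ℤ => ((x k : EReal))) Filter.atTop :=
  liminf_ge_of_delay_ineq_implicit_discrete_general a b d N k₀ τbar τ x ha hd hb0 hb1 hτ hxpos hineq
    hbound
end

section
/- Suppose a > 0, d > 0, b ≥ 0, x(k+1) − x(k) ≥ x(k)·(b − a·x(k − τ(k))) + d for all integers k ≥ k₀, and there is a constant Ñ > 0 with limsup_{k→+∞} x(k) ≤ Ñ and 1 − a·Ñ > 0. Then liminf_{k→+∞} x(k) ≥ (b/a)·(1 − a·Ñ)^{τ̄}. (Discrete case, 𝕋 = ℤ, of Lemma 2.15(ii).) -/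
/-!
Let `x ≤ M` eventually, with `a M < 1`, and put `c = 1 - a M`. Since `b ≥ 0`, the delay inequality
gives `x (k + 1) ≥ c x k`, hence `x k ≥ c ^ τ̄ P` with `P = x (k - τ k)`. If `a P ≥ b`, then
`x (k + 1) ≥ x k (1 + b - a P) ≥ c ^ τ̄ P (1 + b - a P) ≥ c ^ τ̄ b / a`; otherwise `x (k + 1) ≥ x k`.
So once `x` reaches `L = c ^ τ̄ b / a` it stays above `L`; and it must reach `L`, because while
`x < L ≤ b / a` it grows by at least `d` per step, contradicting `x ≤ M`. Letting `M ↓ Ñ` gives the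
bound on the liminf.
-/

open Filter Topology

theorem pow_mul_le_of_mul_le_succ {c : ℝ} (hc : 0 ≤ c) {x : ℤ → ℝ} {K : ℤ}
    (h : ∀ k ≥ K, c * x k ≤ x (k + 1)) (j : ℕ) {k : ℤ} (hk : K + j ≤ k) :
    c ^ j * x (k - j) ≤ x k := by
  induction j generalizing k with
  | zero => simp
  | succ j ih =>
    have hprev : c ^ j * x (k - 1 - j) ≤ x (k - 1) := ih (by omega)
    have hstep : c * x (k - 1) ≤ x k := by simpa using h (k - 1) (by omega)
    calc c ^ (j + 1) * x (k - ↑(j + 1)) = c * (c ^ j * x (k - 1 - j)) := by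
          rw [pow_succ']; push_cast; ring_nf
      _ ≤ c * x (k - 1) := mul_le_mul_of_nonneg_left hprev hc
      _ ≤ x k := hstep

theorem exists_lt_of_add_le_succ {x : ℤ → ℝ} {K : ℤ} {d : ℝ} (hd : 0 < d)
    (h : ∀ k ≥ K, x k + d ≤ x (k + 1)) (M : ℝ) : ∃ k ≥ K, M < x k := by
  have hgrowth : ∀ n : ℕ, x K + n * d ≤ x (K + n) := by
    intro n
    induction n with
    | zero => simp
    | succ n ih =>
      have := h (K + n) (by omega)
      push_cast
      rw [← add_assoc]
      linarith
  obtain ⟨n, hn⟩ := exists_nat_gt ((M - x K) / d)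
  refine ⟨K + n, by omega, ?_⟩
  have := hgrowth n
  rw [div_lt_iff₀ hd] at hn
  linarith

section DelayInequality

variable {a b d M : ℝ} {K : ℤ} {τbar : ℕ} {τ : ℤ → ℕ} {x : ℤ → ℝ}

theorem mul_le_succ_of_delay_ineq (ha : 0 ≤ a) (hb : 0 ≤ b) (hd : 0 ≤ d)
    (hτ : ∀ k, τ k ≤ τbar) (hpos : ∀ k ≥ K, 0 < x k) (hle : ∀ k ≥ K, x k ≤ M)
    (hineq : ∀ k ≥ K + τbar, x (k + 1) - x k ≥ x k * (b - a * x (k - τ k)) + d) :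
    ∀ k ≥ K + τbar, (1 - a * M) * x k ≤ x (k + 1) := by
  intro k hk
  have hτk : (τ k : ℤ) ≤ τbar := by exact_mod_cast hτ k
  have hdelay : x (k - τ k) ≤ M := hle _ (by omega)
  have hxk : 0 < x k := hpos k (by omega)
  have := hineq k hk
  nlinarith [mul_le_mul_of_nonneg_left hdelay (mul_nonneg ha hxk.le), mul_nonneg hxk.le hb]

theorem pow_mul_delay_le (ha : 0 ≤ a) (hb : 0 ≤ b) (hd : 0 ≤ d) (haM : a * M < 1)
    (hτ : ∀ k, τ k ≤ τbar) (hpos : ∀ k ≥ K, 0 < x k) (hle : ∀ k ≥ K, x k ≤ M)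
    (hineq : ∀ k ≥ K + τbar, x (k + 1) - x k ≥ x k * (b - a * x (k - τ k)) + d) :
    ∀ k ≥ K + 2 * τbar, (1 - a * M) ^ τbar * x (k - τ k) ≤ x k := by
  intro k hk
  have hτk : (τ k : ℤ) ≤ τbar := by exact_mod_cast hτ k
  have hM : 0 ≤ M := ((hpos K le_rfl).trans_le (hle K le_rfl)).le
  have hc : 0 ≤ 1 - a * M := by linarith
  have hc1 : 1 - a * M ≤ 1 := by nlinarith
  calc (1 - a * M) ^ τbar * x (k - τ k) ≤ (1 - a * M) ^ τ k * x (k - τ k) :=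
        mul_le_mul_of_nonneg_right (pow_le_pow_of_le_one hc hc1 (hτ k)) (hpos _ (by omega)).le
    _ ≤ x k := pow_mul_le_of_mul_le_succ hc
        (mul_le_succ_of_delay_ineq ha hb hd hτ hpos hle hineq) (τ k) (by omega)

theorem lower_bound_succ_of_delay_ineq (ha : 0 < a) (hb : 0 ≤ b) (hd : 0 ≤ d)
    (haM : a * M < 1) (hτ : ∀ k, τ k ≤ τbar) (hpos : ∀ k ≥ K, 0 < x k)
    (hle : ∀ k ≥ K, x k ≤ M)
    (hineq : ∀ k ≥ K + τbar, x (k + 1) - x k ≥ x k * (b - a * x (k - τ k)) + d)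
    {k : ℤ} (hk : K + 2 * τbar ≤ k) (hxk : b / a * (1 - a * M) ^ τbar ≤ x k) :
    b / a * (1 - a * M) ^ τbar ≤ x (k + 1) := by
  have hτk : (τ k : ℤ) ≤ τbar := by exact_mod_cast hτ k
  set P := x (k - τ k)
  have hPM : P ≤ M := hle _ (by omega)
  have hxpos : 0 < x k := hpos k (by omega)
  have hstep := hineq k (by omega)
  rcases le_or_gt b (a * P) with hbP | hbP
  · have hfactor : 0 ≤ 1 + b - a * P := by nlinarith
    -- `P (1 + b - a P) - b / a = (a P - b) (1 - a P) / a`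
    have hquad : b / a ≤ P * (1 + b - a * P) := by
      rw [div_le_iff₀ ha]
      nlinarith [mul_nonneg (sub_nonneg.2 hbP) (by nlinarith : (0 : ℝ) ≤ 1 - a * P)]
    have hdelay := pow_mul_delay_le ha.le hb hd haM hτ hpos hle hineq k hk
    calc b / a * (1 - a * M) ^ τbar ≤ (1 - a * M) ^ τbar * P * (1 + b - a * P) := by
          rw [mul_assoc, mul_comm]
          exact mul_le_mul_of_nonneg_left hquad (pow_nonneg (by linarith) _)
      _ ≤ x k * (1 + b - a * P) := mul_le_mul_of_nonneg_right hdelay hfactor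
      _ ≤ x (k + 1) := by linarith
  · nlinarith [mul_nonneg hxpos.le (sub_nonneg.2 hbP.le)]

theorem exists_lower_bound_of_delay_ineq (ha : 0 < a) (hb : 0 ≤ b) (hd : 0 < d)
    (haM : a * M < 1) (hτ : ∀ k, τ k ≤ τbar) (hpos : ∀ k ≥ K, 0 < x k)
    (hle : ∀ k ≥ K, x k ≤ M)
    (hineq : ∀ k ≥ K + τbar, x (k + 1) - x k ≥ x k * (b - a * x (k - τ k)) + d) :
    ∃ k ≥ K + 2 * τbar, b / a * (1 - a * M) ^ τbar ≤ x k := by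
  by_contra! hbelow
  have hM : 0 ≤ M := ((hpos K le_rfl).trans_le (hle K le_rfl)).le
  have hL : b / a * (1 - a * M) ^ τbar ≤ b / a :=
    mul_le_of_le_one_right (div_nonneg hb ha.le) (pow_le_one₀ (by linarith) (by nlinarith))
  have hgrowth : ∀ k ≥ K + 3 * τbar, x k + d ≤ x (k + 1) := by
    intro k hk
    have hτk : (τ k : ℤ) ≤ τbar := by exact_mod_cast hτ k
    have hdelay : a * x (k - τ k) < b := by
      have := hbelow (k - τ k) (by omega)
      rw [← lt_div_iff₀' ha]
      linarith
    have := hineq k (by omega)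
    nlinarith [mul_nonneg (hpos k (by omega)).le (sub_nonneg.2 hdelay.le)]
  obtain ⟨k, hk, hMk⟩ := exists_lt_of_add_le_succ hd hgrowth M
  exact (hle k (by omega)).not_gt hMk

theorem eventually_lower_bound_of_delay_ineq (ha : 0 < a) (hb : 0 ≤ b) (hd : 0 < d)
    (haM : a * M < 1) (hτ : ∀ k, τ k ≤ τbar) (hpos : ∀ k ≥ K, 0 < x k)
    (hle : ∀ k ≥ K, x k ≤ M)
    (hineq : ∀ k ≥ K + τbar, x (k + 1) - x k ≥ x k * (b - a * x (k - τ k)) + d) :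
    ∀ᶠ k in atTop, b / a * (1 - a * M) ^ τbar ≤ x k := by
  obtain ⟨k₁, hk₁, hx₁⟩ := exists_lower_bound_of_delay_ineq ha hb hd haM hτ hpos hle hineq
  refine eventually_atTop.2 ⟨k₁, fun k hk => ?_⟩
  induction k, hk using Int.leInduction with
  | base => exact hx₁
  | succ k hk ih =>
    exact lower_bound_succ_of_delay_ineq ha hb hd.le haM hτ hpos hle hineq (by omega) ih

end DelayInequality

theorem liminf_ge_of_delay_ineq_explicit_discrete_general
    (a b d N : ℝ) (k₀ : ℤ) (τbar : ℕ) (τ : ℤ → ℕ) (x : ℤ → ℝ)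
    (ha : 0 < a) (hd : 0 < d) (hb : 0 ≤ b)
    (hτ : ∀ k : ℤ, τ k ≤ τbar)
    (hxpos : ∀ k : ℤ, k₀ - (τbar : ℤ) ≤ k → 0 < x k)
    (hineq : ∀ k : ℤ, k₀ ≤ k →
      x (k + 1) - x k ≥ x k * (b - a * x (k - (τ k : ℤ))) + d)
    (hreg : 0 < 1 - a * N)
    (hbound : Filter.limsup (fun k : ℤ => ((x k : EReal))) Filter.atTop ≤ ((N : ℝ) : EReal)) :
    ((b / a * (1 - a * N) ^ τbar : ℝ) : EReal) ≤
      Filter.liminf (fun k : ℤ => ((x k : EReal))) Filter.atTop := by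
  have hlim : Tendsto (fun M : ℝ => ((b / a * (1 - a * M) ^ τbar : ℝ) : EReal)) (𝓝[>] N)
      (𝓝 ((b / a * (1 - a * N) ^ τbar : ℝ) : EReal)) :=
    ((EReal.continuous_coe_iff.2 (by fun_prop)).tendsto N).mono_left nhdsWithin_le_nhds
  have haM : ∀ᶠ M in 𝓝[>] N, a * M < 1 :=
    eventually_nhdsWithin_of_eventually_nhds
      (((continuous_const_mul a).tendsto N).eventually (gt_mem_nhds (by linarith)))
  refine le_of_tendsto hlim ?_
  filter_upwards [self_mem_nhdsWithin, haM] with M (hNM : N < M) haM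
  obtain ⟨K, hK⟩ := eventually_atTop.1 <|
    (eventually_lt_of_limsup_lt (hbound.trans_lt (EReal.coe_lt_coe_iff.2 hNM))).mono
      fun k hk => (EReal.coe_lt_coe_iff.1 hk).le
  refine le_liminf_of_le (by isBoundedDefault) ?_
  filter_upwards [eventually_lower_bound_of_delay_ineq (K := max K (k₀ - τbar)) ha hb hd haM hτ
    (fun k hk => hxpos k (le_of_max_le_right hk)) (fun k hk => hK k (le_of_max_le_left hk))
    (fun k hk => hineq k (by omega))] with k hk
  exact EReal.coe_le_coe_iff.2 hk

/-- Discrete case (𝕋 = ℤ) of Lemma 2.15(ii): if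
`x(k+1) − x(k) ≥ x(k)(b − a x(k − τ(k))) + d` for `k ≥ k₀`,
`limsup_{k→∞} x(k) ≤ Ñ` and `1 − a Ñ > 0`, then
`liminf_{k→∞} x(k) ≥ (b/a)(1 − a Ñ)^{τ̄}`. -/
theorem liminf_ge_of_delay_ineq_explicit_discrete
    (a b d N : ℝ) (k₀ : ℤ) (τbar : ℕ) (τ : ℤ → ℕ) (x : ℤ → ℝ)
    (ha : 0 < a) (hd : 0 < d) (hb : 0 ≤ b)
    (hτ : ∀ k : ℤ, τ k ≤ τbar)
    (hxpos : ∀ k : ℤ, k₀ - (τbar : ℤ) ≤ k → 0 < x k)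
    (hineq : ∀ k : ℤ, k₀ ≤ k →
      x (k + 1) - x k ≥ x k * (b - a * x (k - (τ k : ℤ))) + d)
    (hN : 0 < N) (hreg : 0 < 1 - a * N)
    (hbound : Filter.limsup (fun k : ℤ => ((x k : EReal))) Filter.atTop ≤ ((N : ℝ) : EReal)) :
    ((b / a * (1 - a * N) ^ τbar : ℝ) : EReal) ≤
      Filter.liminf (fun k : ℤ => ((x k : EReal))) Filter.atTop :=
  liminf_ge_of_delay_ineq_explicit_discrete_general a b d N k₀ τbar τ x ha hd hb hτ hxpos hineq hreg
    hbound
end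

section
/- Assume (H1)–(H3) for the continuous-time system. Then every solution x = (x₁,…,xₙ) of the system on [t₀, ∞) with x_i(s) ≥ 0 on [t₀ − θ, t₀] satisfies x_i^m ≤ liminf_{t→+∞} x_i(t) ≤ limsup_{t→+∞} x_i(t) ≤ x_i^M for every i = 1,…,n; in particular the system is permanent. (Lemma 3.1 and Theorem 3.1 in the case 𝕋 = ℝ.) -/
open Filter Finset

/-- If `u` has derivative `F r` at every point of `[s,t]` and `F ≤ C` on `(s,t)`,
then `u t - u s ≤ C * (t - s)`. -/
lemma slope_le_aux {u F : ℝ → ℝ} {s t C : ℝ} (hst : s ≤ t)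
    (hder : ∀ r ∈ Set.Icc s t, HasDerivAt u (F r) r)
    (hF : ∀ r ∈ Set.Ioo s t, F r ≤ C) :
    u t - u s ≤ C * (t - s) := by
  set g : ℝ → ℝ := fun r => C * r - u r with hg
  have hgd : ∀ r ∈ Set.Icc s t, HasDerivAt g (C * 1 - F r) r := fun r hr =>
    ((hasDerivAt_id r).const_mul C).sub (hder r hr)
  have hmono : MonotoneOn g (Set.Icc s t) := by
    apply monotoneOn_of_deriv_nonneg (convex_Icc s t)
    · exact fun r hr => (hgd r hr).continuousAt.continuousWithinAt
    · intro r hr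
      rw [interior_Icc] at hr
      exact (hgd r (Set.mem_Icc_of_Ioo hr)).differentiableAt.differentiableWithinAt
    · intro r hr
      rw [interior_Icc] at hr
      have := (hgd r (Set.mem_Icc_of_Ioo hr)).deriv
      rw [this]
      have := hF r hr
      linarith
  have h := hmono (Set.left_mem_Icc.mpr hst) (Set.right_mem_Icc.mpr hst) hst
  simp only [hg] at h
  nlinarith [h]

/-- If `u` has derivative `F r` at every point of `[s,t]` and `C ≤ F` on `(s,t)`,
then `C * (t - s) ≤ u t - u s`. -/
lemma slope_ge_aux {u F : ℝ → ℝ} {s t C : ℝ} (hst : s ≤ t)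
    (hder : ∀ r ∈ Set.Icc s t, HasDerivAt u (F r) r)
    (hF : ∀ r ∈ Set.Ioo s t, C ≤ F r) :
    C * (t - s) ≤ u t - u s := by
  have h := slope_le_aux (u := fun r => -u r) (F := fun r => -F r) (C := -C) hst
    (fun r hr => (hder r hr).neg) (fun r hr => neg_le_neg (hF r hr))
  nlinarith [h]

/-- Master lemma: eventual upper and lower bounds for the scalar delayed logistic-type
inequality. -/
lemma key_bounds (t₀ A bl al bu τm τp xM xm : ℝ) (τ u F : ℝ → ℝ)
    (hA : 0 < A) (hbl : 0 < bl) (hal : 0 < al) (hbu : 0 < bu)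
    (hτm : 0 < τm) (hτ : ∀ t, τm ≤ τ t ∧ τ t ≤ τp)
    (hu : ∀ t, t₀ ≤ t → HasDerivAt u (F t) t)
    (hub : ∀ t, t₀ ≤ t → F t ≤ A - bl * Real.exp (u (t - τ t)))
    (hlb : ∀ t, t₀ ≤ t → al - bu * Real.exp (u (t - τ t)) ≤ F t)
    (hM : Real.exp xM = (A / bl) * Real.exp (A * τp))
    (hm : Real.exp xm = (al / bu) * Real.exp (-(τp * (bu * Real.exp xM)))) :
    (∃ T, ∀ t, T ≤ t → u t ≤ xM) ∧ (∃ T, ∀ t, T ≤ t → xm ≤ u t) := by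
  have hτp : 0 < τp := lt_of_lt_of_le hτm (le_trans (hτ 0).1 (hτ 0).2)
  -- derivative available on intervals above t₀
  have hder : ∀ s : ℝ, t₀ ≤ s → ∀ t : ℝ, ∀ r ∈ Set.Icc s t, HasDerivAt u (F r) r :=
    fun s hs t r hr => hu r (hs.trans hr.1)
  -- F ≤ A everywhere above t₀
  have hFA : ∀ t, t₀ ≤ t → F t ≤ A := by
    intro t ht
    have := hub t ht
    have := Real.exp_pos (u (t - τ t))
    nlinarith
  -- delayed time stays above t₀ + τp - τp = t₀
  have hdelay : ∀ s t : ℝ, s + τp ≤ t → s ≤ t - τ t ∧ t - τ t ≤ t := by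
    intro s t hst
    constructor
    · have := (hτ t).2; linarith
    · have := (hτ t).1; linarith
  -- claim1 : above xM (past t₀+τp) ⇒ derivative negative
  have claim1 : ∀ t, t₀ + τp ≤ t → xM < u t → F t < 0 := by
    intro t ht hgt
    obtain ⟨h1, h2⟩ := hdelay t₀ t ht
    have hslope : u t - u (t - τ t) ≤ A * (t - (t - τ t)) :=
      slope_le_aux h2 (hder _ h1 _) (fun r hr => hFA r (h1.trans hr.1.le))
    have hτt2 : τ t ≤ τp := (hτ t).2
    have hAτ : A * (t - (t - τ t)) ≤ A * τp := by
      have : t - (t - τ t) = τ t := by ring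
      rw [this]
      exact mul_le_mul_of_nonneg_left hτt2 hA.le
    have hlow : xM - A * τp < u (t - τ t) := by linarith
    have e1 : Real.exp (xM - A * τp) < Real.exp (u (t - τ t)) := Real.exp_lt_exp.mpr hlow
    have e2 : Real.exp (xM - A * τp) = A / bl := by
      rw [Real.exp_sub, hM]
      field_simp
    have e3 : A < bl * Real.exp (u (t - τ t)) := by
      rw [e2] at e1
      have := (div_lt_iff₀ hbl).mp e1
      linarith [this]
    have := hub t (h1.trans h2)
    linarith
  -- ε for the quantitative decrease
  set ε : ℝ := A * (Real.exp (A * τp) - 1) with hε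
  have hεpos : 0 < ε := by
    have h1 : (1 : ℝ) < Real.exp (A * τp) := Real.one_lt_exp_iff.mpr (by positivity)
    have : 0 < Real.exp (A * τp) - 1 := by linarith
    positivity
  have hblxM : bl * Real.exp xM = A * Real.exp (A * τp) := by
    rw [hM]; field_simp
  -- claim2 : if always above xM (past t₀ + τp), then F ≤ -ε past t₀ + 2τp
  have claim2 : ∀ t, t₀ + 2 * τp ≤ t → (∀ s, t₀ + τp ≤ s → xM < u s) → F t ≤ -ε := by
    intro t ht hall
    obtain ⟨h1, h2⟩ := hdelay (t₀ + τp) t (by linarith)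
    have hgt : xM < u (t - τ t) := hall _ h1
    have e1 : Real.exp xM ≤ Real.exp (u (t - τ t)) := Real.exp_le_exp.mpr hgt.le
    have e2 : A * Real.exp (A * τp) ≤ bl * Real.exp (u (t - τ t)) := by
      rw [← hblxM]
      exact mul_le_mul_of_nonneg_left e1 hbl.le
    have := hub t (by linarith)
    simp only [hε]
    nlinarith
  -- existence of a time with u ≤ xM
  have upper_exists : ∃ t1, t₀ + τp ≤ t1 ∧ u t1 ≤ xM := by
    by_contra h
    push_neg at h
    have hall : ∀ s, t₀ + τp ≤ s → xM < u s := fun s hs => h s hs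
    set T2 : ℝ := t₀ + 2 * τp with hT2
    set tstar : ℝ := T2 + (u T2 - xM) / ε + 1 with htstar
    have hgtT2 : xM < u T2 := hall T2 (by simp only [hT2]; linarith)
    have hq : 0 < (u T2 - xM) / ε := div_pos (by linarith) hεpos
    have hst : T2 ≤ tstar := by simp only [htstar]; linarith
    have hslope : u tstar - u T2 ≤ -ε * (tstar - T2) := by
      apply slope_le_aux hst (hder T2 (by simp only [hT2]; linarith) tstar)
      intro r hr
      exact claim2 r (le_of_lt (lt_of_le_of_lt (le_refl T2) hr.1) |>.trans (le_refl r) |> fun _ => (by simp only [hT2] at hr ⊢; linarith [hr.1])) hall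
    have hcalc : -ε * (tstar - T2) = -(u T2 - xM) - ε := by
      simp only [htstar]
      field_simp
      ring
    have hfin : u tstar ≤ xM - ε := by rw [hcalc] at hslope; linarith
    have := hall tstar (by simp only [htstar, hT2]; linarith)
    linarith
  obtain ⟨t1, ht1, hut1⟩ := upper_exists
  -- persistence of the upper bound
  have upper : ∀ t, t1 ≤ t → u t ≤ xM := by
    intro t2 ht2
    by_contra hcon
    push_neg at hcon
    have ht1t₀ : t₀ ≤ t1 := by linarith
    set S : Set ℝ := Set.Icc t1 t2 ∩ u ⁻¹' Set.Iic xM with hS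
    have hucont : ContinuousOn u (Set.Icc t1 t2) := fun r hr =>
      (hu r (ht1t₀.trans hr.1)).continuousAt.continuousWithinAt
    have hSc : IsClosed S := hucont.preimage_isClosed_of_isClosed isClosed_Icc isClosed_Iic
    have ht1S : t1 ∈ S := ⟨Set.left_mem_Icc.mpr ht2, by simpa using hut1⟩
    have hbdd : BddAbove S := BddAbove.mono Set.inter_subset_left bddAbove_Icc
    set σ : ℝ := sSup S with hσ
    have hσS : σ ∈ S := hSc.csSup_mem ⟨t1, ht1S⟩ hbdd
    have hσle : u σ ≤ xM := hσS.2
    have hσt2 : σ < t2 :=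
      lt_of_le_of_ne hσS.1.2 (fun heq => by rw [heq] at hσle; linarith)
    have hmid : ∀ r ∈ Set.Ioo σ t2, F r ≤ 0 := by
      intro r hr
      have hrgt : xM < u r := by
        by_contra hle
        push_neg at hle
        have hrS : r ∈ S := ⟨⟨hσS.1.1.trans hr.1.le, hr.2.le⟩, hle⟩
        have := le_csSup hbdd hrS
        rw [← hσ] at this
        linarith [hr.1]
      have : t₀ + τp ≤ r := by
        have := hσS.1.1
        linarith [hr.1]
      exact (claim1 r this hrgt).le
    have hslope : u t2 - u σ ≤ 0 * (t2 - σ) :=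
      slope_le_aux hσt2.le (hder σ (ht1t₀.trans hσS.1.1) t2) hmid
    have : u t2 ≤ u σ := by linarith [hslope]
    linarith
  refine ⟨⟨t1, upper⟩, ?_⟩
  -- lower bound part
  set B : ℝ := bu * Real.exp xM with hB
  have hBpos : 0 < B := by positivity
  set T1 : ℝ := t1 + τp with hT1
  have hT1t₀ : t₀ ≤ T1 := by simp only [hT1]; linarith
  -- F ≥ -B past T1
  have hFB : ∀ t, T1 ≤ t → -B ≤ F t := by
    intro t ht
    obtain ⟨h1, h2⟩ := hdelay t1 t (by simp only [hT1] at ht; linarith)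
    have hule : u (t - τ t) ≤ xM := upper _ h1
    have e1 : bu * Real.exp (u (t - τ t)) ≤ B := by
      simp only [hB]
      exact mul_le_mul_of_nonneg_left (Real.exp_le_exp.mpr hule) hbu.le
    have := hlb t (by linarith)
    linarith
  -- claim1' : below xm past T1 + τp ⇒ derivative positive
  have claim1' : ∀ t, T1 + τp ≤ t → u t < xm → 0 < F t := by
    intro t ht hlt
    obtain ⟨h1, h2⟩ := hdelay T1 t ht
    have hslope : -B * (t - (t - τ t)) ≤ u t - u (t - τ t) :=
      slope_ge_aux h2 (hder _ (hT1t₀.trans h1) _) (fun r hr => hFB r (h1.trans hr.1.le))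
    have hτt2 : τ t ≤ τp := (hτ t).2
    have hBτ : -B * τp ≤ -B * (t - (t - τ t)) := by
      have heq : t - (t - τ t) = τ t := by ring
      rw [heq]
      nlinarith
    have hupd : u (t - τ t) < xm + B * τp := by linarith
    have e1 : Real.exp (u (t - τ t)) < Real.exp (xm + B * τp) := Real.exp_lt_exp.mpr hupd
    have e2 : bu * Real.exp (xm + B * τp) = al := by
      have h0 : -(τp * B) + B * τp = 0 := by ring
      rw [Real.exp_add, hm, mul_assoc (al / bu), ← Real.exp_add, h0, Real.exp_zero, mul_one]
      field_simp
    have e3 : bu * Real.exp (u (t - τ t)) < al := by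
      calc bu * Real.exp (u (t - τ t)) < bu * Real.exp (xm + B * τp) := by
            exact mul_lt_mul_of_pos_left e1 hbu
        _ = al := e2
    have := hlb t (hT1t₀.trans (h1.trans h2))
    linarith
  -- ε' for the quantitative increase
  set ε' : ℝ := al * (1 - Real.exp (-(τp * B))) with hε'
  have hε'pos : 0 < ε' := by
    have h1 : Real.exp (-(τp * B)) < 1 := Real.exp_lt_one_iff.mpr (by nlinarith)
    have : 0 < 1 - Real.exp (-(τp * B)) := by linarith
    positivity
  have hbuxm : bu * Real.exp xm = al * Real.exp (-(τp * B)) := by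
    rw [hm]; simp only [hB]; field_simp
  -- claim2' : if always below xm past T1 + τp, then F ≥ ε' past T1 + 2τp
  have claim2' : ∀ t, T1 + 2 * τp ≤ t → (∀ s, T1 + τp ≤ s → u s < xm) → ε' ≤ F t := by
    intro t ht hall
    obtain ⟨h1, h2⟩ := hdelay (T1 + τp) t (by linarith)
    have hlt : u (t - τ t) < xm := hall _ h1
    have e1 : bu * Real.exp (u (t - τ t)) ≤ al * Real.exp (-(τp * B)) := by
      rw [← hbuxm]
      exact mul_le_mul_of_nonneg_left (Real.exp_le_exp.mpr hlt.le) hbu.le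
    have := hlb t (by linarith)
    simp only [hε']
    nlinarith
  -- existence of a time with u ≥ xm
  have lower_exists : ∃ t2, T1 + τp ≤ t2 ∧ xm ≤ u t2 := by
    by_contra h
    push_neg at h
    have hall : ∀ s, T1 + τp ≤ s → u s < xm := fun s hs => h s hs
    set T3 : ℝ := T1 + 2 * τp with hT3
    set tstar : ℝ := T3 + (xm - u T3) / ε' + 1 with htstar
    have hltT3 : u T3 < xm := hall T3 (by simp only [hT3]; linarith)
    have hq : 0 < (xm - u T3) / ε' := div_pos (by linarith) hε'pos
    have hst : T3 ≤ tstar := by simp only [htstar]; linarith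
    have hslope : ε' * (tstar - T3) ≤ u tstar - u T3 := by
      apply slope_ge_aux hst (hder T3 (by simp only [hT3]; linarith) tstar)
      intro r hr
      exact claim2' r (by simp only [hT3] at hr ⊢; linarith [hr.1]) hall
    have hcalc : ε' * (tstar - T3) = (xm - u T3) + ε' := by
      simp only [htstar]
      field_simp
      ring
    have hfin : xm + ε' ≤ u tstar := by rw [hcalc] at hslope; linarith
    have := hall tstar (by simp only [htstar, hT3]; linarith)
    linarith
  obtain ⟨t2, ht2, hut2⟩ := lower_exists
  -- persistence of the lower bound
  refine ⟨t2, ?_⟩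
  intro t3 ht3
  by_contra hcon
  push_neg at hcon
  have ht2t₀ : t₀ ≤ t2 := by linarith
  set S : Set ℝ := Set.Icc t2 t3 ∩ u ⁻¹' Set.Ici xm with hS
  have hucont : ContinuousOn u (Set.Icc t2 t3) := fun r hr =>
    (hu r (ht2t₀.trans hr.1)).continuousAt.continuousWithinAt
  have hSc : IsClosed S := hucont.preimage_isClosed_of_isClosed isClosed_Icc isClosed_Ici
  have ht2S : t2 ∈ S := ⟨Set.left_mem_Icc.mpr ht3, by simpa using hut2⟩
  have hbdd : BddAbove S := BddAbove.mono Set.inter_subset_left bddAbove_Icc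
  set σ : ℝ := sSup S with hσ
  have hσS : σ ∈ S := hSc.csSup_mem ⟨t2, ht2S⟩ hbdd
  have hσge : xm ≤ u σ := hσS.2
  have hσt3 : σ < t3 :=
    lt_of_le_of_ne hσS.1.2 (fun heq => by rw [heq] at hσge; linarith)
  have hmid : ∀ r ∈ Set.Ioo σ t3, 0 ≤ F r := by
    intro r hr
    have hrlt : u r < xm := by
      by_contra hge
      push_neg at hge
      have hrS : r ∈ S := ⟨⟨hσS.1.1.trans hr.1.le, hr.2.le⟩, hge⟩
      have := le_csSup hbdd hrS
      rw [← hσ] at this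
      linarith [hr.1]
    have : T1 + τp ≤ r := by
      have := hσS.1.1
      linarith [hr.1]
    exact (claim1' r this hrlt).le
  have hslope : 0 * (t3 - σ) ≤ u t3 - u σ :=
    slope_ge_aux hσt3.le (hder σ (ht2t₀.trans hσS.1.1) t3) hmid
  have : u σ ≤ u t3 := by linarith [hslope]
  linarith

/-- Permanence (Lemma 3.1 / Theorem 3.1, case 𝕋 = ℝ) for the continuous-time
multispecies Lotka–Volterra mutualism system with time-varying delays:
under (H1)–(H3), every solution with nonnegative initial data satisfies
`x_i^m ≤ liminf x_i ≤ limsup x_i ≤ x_i^M` for every species `i`. -/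
theorem permanence_continuous
    (n : ℕ) (t₀ τm τp δm δp θ : ℝ)
    (a b : Fin n → ℝ → ℝ) (c : Fin n → Fin n → ℝ → ℝ) (d : Fin n → Fin n → ℝ)
    (τ δ : Fin n → ℝ → ℝ)
    (al au bl bu : Fin n → ℝ) (cl cu : Fin n → Fin n → ℝ)
    (xM xm : Fin n → ℝ) (x : Fin n → ℝ → ℝ)
    -- (H1): continuity and bounds of the almost periodic coefficients
    (hacont : ∀ i, Continuous (a i)) (hbcont : ∀ i, Continuous (b i))
    (hccont : ∀ i j, Continuous (c i j))
    (hτcont : ∀ i, Continuous (τ i)) (hδcont : ∀ j, Continuous (δ j))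
    (hal : ∀ i, 0 < al i) (ha : ∀ i t, al i ≤ a i t ∧ a i t ≤ au i)
    (hbl : ∀ i, 0 < bl i) (hb : ∀ i t, bl i ≤ b i t ∧ b i t ≤ bu i)
    (hcl : ∀ i j, i ≠ j → 0 < cl i j)
    (hc : ∀ i j t, i ≠ j → cl i j ≤ c i j t ∧ c i j t ≤ cu i j)
    (hdij : ∀ i j, i ≠ j → 1 < d i j)
    (hτm : 0 < τm) (hτ : ∀ i t, τm ≤ τ i t ∧ τ i t ≤ τp)
    (hδm : 0 < δm) (hδ : ∀ j t, δm ≤ δ j t ∧ δ j t ≤ δp)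
    (hθ : θ = max τp δp)
    -- definitions of the permanence bounds
    (hxM : ∀ i, xM i =
      Real.log (((au i + ∑ j ∈ Finset.univ.erase i, cu i j) / bl i) *
        Real.exp ((au i + ∑ j ∈ Finset.univ.erase i, cu i j) * τp)))
    (hxm : ∀ i, xm i =
      Real.log ((al i / bu i) * Real.exp (-(τp * (bu i * Real.exp (xM i))))))
    -- (H3)
    (hH3 : ∀ i, al i * Real.exp (-(τp * (bu i * Real.exp (xM i)))) > bu i)
    -- x is a solution with nonnegative initial data
    (hxcont : ∀ i, ContinuousOn (x i) (Set.Ici (t₀ - θ)))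
    (hinit : ∀ i s, t₀ - θ ≤ s → s ≤ t₀ → 0 ≤ x i s)
    (hsol : ∀ i, ∀ t : ℝ, t₀ ≤ t → HasDerivAt (x i)
      (a i t - b i t * Real.exp (x i (t - τ i t)) +
        ∑ j ∈ Finset.univ.erase i, c i j t * Real.exp (x j (t - δ j t)) /
          (d i j + Real.exp (x j (t - δ j t)))) t) :
    ∀ i, ((xm i : EReal)) ≤ Filter.liminf (fun t : ℝ => ((x i t : EReal))) Filter.atTop ∧
      Filter.limsup (fun t : ℝ => ((x i t : EReal))) Filter.atTop ≤ ((xM i : EReal)) := by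
  intro i
  -- the constant A of the i-th equation
  set A : ℝ := au i + ∑ j ∈ Finset.univ.erase i, cu i j with hAdef
  have hali : 0 < al i := hal i
  have hbli : 0 < bl i := hbl i
  have haui : 0 < au i := lt_of_lt_of_le hali (le_trans (ha i 0).1 (ha i 0).2)
  have hbui : 0 < bu i := lt_of_lt_of_le hbli (le_trans (hb i 0).1 (hb i 0).2)
  have hsumnn : 0 ≤ ∑ j ∈ Finset.univ.erase i, cu i j := by
    apply Finset.sum_nonneg
    intro j hj
    have hne : i ≠ j := (Finset.mem_erase.mp hj).1.symm
    exact le_trans (hcl i j hne).le (le_trans (hc i j 0 hne).1 (hc i j 0 hne).2)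
  have hApos : 0 < A := by simp only [hAdef]; linarith
  -- the derivative function
  set F : ℝ → ℝ := fun t => a i t - b i t * Real.exp (x i (t - τ i t)) +
      ∑ j ∈ Finset.univ.erase i, c i j t * Real.exp (x j (t - δ j t)) /
        (d i j + Real.exp (x j (t - δ j t))) with hFdef
  -- upper and lower bounds on F
  have hsum_ub : ∀ t, ∑ j ∈ Finset.univ.erase i, c i j t * Real.exp (x j (t - δ j t)) /
      (d i j + Real.exp (x j (t - δ j t))) ≤ ∑ j ∈ Finset.univ.erase i, cu i j := by
    intro t
    apply Finset.sum_le_sum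
    intro j hj
    have hne : i ≠ j := (Finset.mem_erase.mp hj).1.symm
    have hd : (0:ℝ) < d i j := lt_trans one_pos (hdij i j hne)
    have hexp := Real.exp_pos (x j (t - δ j t))
    have hdenom : 0 < d i j + Real.exp (x j (t - δ j t)) := by linarith
    rw [div_le_iff₀ hdenom]
    have hcle : c i j t ≤ cu i j := (hc i j t hne).2
    have hclpos : 0 < c i j t := lt_of_lt_of_le (hcl i j hne) (hc i j t hne).1
    nlinarith
  have hsum_lb : ∀ t, 0 ≤ ∑ j ∈ Finset.univ.erase i, c i j t * Real.exp (x j (t - δ j t)) /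
      (d i j + Real.exp (x j (t - δ j t))) := by
    intro t
    apply Finset.sum_nonneg
    intro j hj
    have hne : i ≠ j := (Finset.mem_erase.mp hj).1.symm
    have hd : (0:ℝ) < d i j := lt_trans one_pos (hdij i j hne)
    have hexp := Real.exp_pos (x j (t - δ j t))
    have hclpos : 0 < c i j t := lt_of_lt_of_le (hcl i j hne) (hc i j t hne).1
    positivity
  have hub : ∀ t, t₀ ≤ t → F t ≤ A - bl i * Real.exp (x i (t - τ i t)) := by
    intro t ht
    simp only [hFdef, hAdef]
    have h1 : a i t ≤ au i := (ha i t).2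
    have h2 : bl i ≤ b i t := (hb i t).1
    have hexp := Real.exp_pos (x i (t - τ i t))
    have h3 := hsum_ub t
    nlinarith
  have hlb : ∀ t, t₀ ≤ t → al i - bu i * Real.exp (x i (t - τ i t)) ≤ F t := by
    intro t ht
    simp only [hFdef]
    have h1 : al i ≤ a i t := (ha i t).1
    have h2 : b i t ≤ bu i := (hb i t).2
    have hexp := Real.exp_pos (x i (t - τ i t))
    have h3 := hsum_lb t
    nlinarith
  -- exp-form of the bound definitions
  have hMexp : Real.exp (xM i) = (A / bl i) * Real.exp (A * τp) := by
    rw [hxM i]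
    rw [Real.exp_log (by positivity)]
  have hmexp : Real.exp (xm i) = (al i / bu i) * Real.exp (-(τp * (bu i * Real.exp (xM i)))) := by
    rw [hxm i]
    rw [Real.exp_log (by positivity)]
  obtain ⟨⟨TU, hTU⟩, ⟨TL, hTL⟩⟩ := key_bounds t₀ A (bl i) (al i) (bu i) τm τp (xM i) (xm i)
    (τ i) (x i) F hApos hbli hali hbui hτm (hτ i) (fun t ht => hsol i t ht) hub hlb hMexp hmexp
  constructor
  · have hev : ∀ᶠ t : ℝ in atTop, ((xm i : EReal)) ≤ ((x i t : EReal)) := by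
      filter_upwards [eventually_ge_atTop TL] with t ht
      exact_mod_cast hTL t ht
    exact le_liminf_of_le (by isBoundedDefault) hev
  · have hev : ∀ᶠ t : ℝ in atTop, ((x i t : EReal)) ≤ ((xM i : EReal)) := by
      filter_upwards [eventually_ge_atTop TU] with t ht
      exact_mod_cast hTU t ht
    exact limsup_le_of_le (by isBoundedDefault) hev
end

section
/- Assume (H1)–(H3) for the discrete system on ℤ. Then every solution x = (x₁,…,xₙ) of the system for k ≥ k₀ with x_i(s) ≥ 0 for k₀ − θ ≤ s ≤ k₀ satisfies x_i^m ≤ liminf_{k→+∞} x_i(k) ≤ limsup_{k→+∞} x_i(k) ≤ x_i^M for every i = 1,…,n; in particular the system is permanent. (Lemma 3.1 and Theorem 3.1 in the case 𝕋 = ℤ.) -/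
/-!
Fix a species and put `A = aᵘ + ∑ cᵘ`. Since the interaction terms lie between `0` and `cᵘ`,
`y = xᵢ` obeys the scalar delayed inequalities
`y k + aˡ - bᵘ e^{y(k-τ k)} ≤ y (k+1) ≤ y k + A - bˡ e^{y(k-τ k)}`.

Upper bound: `y` grows by at most `A` per step, so `e^{y(k-τ k)} ≥ (1-A)^{τ⁺} e^{y k}`, and
`z = y - xᴹ` satisfies `z (k+1) ≤ z k + A (1 - e^{z k})`: above level `ε` it drops by
`A (e^ε - 1)` per step, and below `ε` it stays there.

Lower bound: once `y ≤ M` with `q = bᵘ e^M < 1`, `y` falls by at most `q` per step, hence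
`y k ≥ y (k-τ k) + τ⁺ log (1-q)`. At a step where `y` does not rise by a fixed amount, the delayed
value is bounded below, and as `v ↦ v - bᵘ e^v` is increasing where `bᵘ e^v ≤ 1`, this gives a
floor approaching `log (aˡ/bᵘ (1-q)^{τ⁺})`. Letting `M ↓ xᴹ` yields `xᵐ`.
-/

open Filter Finset Real Topology

section Telescoping

variable {y : ℤ → ℝ} {C : ℝ} {K : ℤ}

theorem le_add_mul_of_forall_succ_le (h : ∀ k ≥ K, y (k + 1) ≤ y k + C) :
    ∀ k ≥ K, y k ≤ y K + (k - K) * C := by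
  intro k hk
  induction k, hk using Int.leInduction with
  | base => simp
  | succ k hk ih => have := h k hk; push_cast; linarith

theorem add_mul_le_of_forall_le_succ (h : ∀ k ≥ K, y k + C ≤ y (k + 1)) :
    ∀ k ≥ K, y K + (k - K) * C ≤ y k := by
  intro k hk
  induction k, hk using Int.leInduction with
  | base => simp
  | succ k hk ih => have := h k hk; push_cast; linarith

theorem eventually_le_of_forall_succ_le_max {d M : ℝ} (hd : 0 < d)
    (h : ∀ k ≥ K, y (k + 1) ≤ max (y k - d) M) : ∀ᶠ k in atTop, y k ≤ M := by
  have hmax : ∀ k ≥ K, y k ≤ max (y K - (k - K) * d) M := by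
    intro k hk
    induction k, hk using Int.leInduction with
    | base => simp
    | succ k hk ih =>
      refine (h k hk).trans (max_le ?_ (le_max_right _ _))
      rcases le_max_iff.mp ih with ih | ih
      · exact le_max_of_le_left (by push_cast; linarith)
      · exact le_max_of_le_right (by linarith)
  obtain ⟨N, hN⟩ := exists_int_ge ((y K - M) / d)
  filter_upwards [eventually_ge_atTop K, eventually_ge_atTop (K + N)] with k hK hN'
  have hNk : (N : ℝ) ≤ k - K := by exact_mod_cast (by omega : N ≤ k - K)
  have hdrop : y K - M ≤ (k - K) * d := by
    rw [div_le_iff₀ hd] at hN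
    nlinarith
  exact (hmax k hK).trans (max_le (by linarith) le_rfl)

theorem eventually_ge_of_forall_min_le_succ {d B : ℝ} (hd : 0 < d)
    (h : ∀ k ≥ K, min (y k + d) B ≤ y (k + 1)) : ∀ᶠ k in atTop, B ≤ y k := by
  have hneg : ∀ k ≥ K, -y (k + 1) ≤ max (-y k - d) (-B) := fun k hk => by
    rw [← neg_add', max_neg_neg]
    exact neg_le_neg (h k hk)
  filter_upwards [eventually_le_of_forall_succ_le_max (y := fun k => -y k) hd hneg] with k hk
  linarith

end Telescoping

theorem add_mul_one_sub_exp_le_max {A z ε : ℝ} (hA0 : 0 ≤ A) (hA1 : A ≤ 1) (hε : 0 ≤ ε) :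
    z + A * (1 - exp z) ≤ max (z - A * (exp ε - 1)) ε := by
  rcases le_or_gt z ε with hz | hz
  · have := add_one_le_exp z
    refine le_max_of_le_right ?_
    nlinarith [mul_nonneg (sub_nonneg.mpr hA1) (sub_nonneg.mpr hz), mul_nonneg hA0 hε]
  · have := exp_le_exp.mpr hz.le
    refine le_max_of_le_left ?_
    nlinarith

theorem sub_mul_exp_le_sub_mul_exp {β u v : ℝ} (hβ : 0 ≤ β) (huv : u ≤ v) (hv : β * exp v ≤ 1) :
    u - β * exp u ≤ v - β * exp v := by
  have hchord : exp v - exp u ≤ exp v * (v - u) := by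
    have h := add_one_le_exp (u - v)
    rw [exp_sub] at h
    have := exp_pos v
    rw [le_div_iff₀ this] at h
    nlinarith
  nlinarith [mul_le_mul_of_nonneg_left hchord hβ, mul_le_mul_of_nonneg_right hv (sub_nonneg.mpr huv)]

theorem mul_div_add_le_self {c d e : ℝ} (hc : 0 ≤ c) (hd : 0 ≤ d) (he : 0 ≤ e) :
    c * e / (d + e) ≤ c := by
  rw [mul_div_assoc]
  exact mul_le_of_le_one_right hc (div_le_one_of_le₀ (le_add_of_nonneg_left hd) (by positivity))

theorem sum_mul_div_add_mem_Icc {ι : Type*} (s : Finset ι) {c cu d e : ι → ℝ}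
    (hc : ∀ j ∈ s, 0 ≤ c j ∧ c j ≤ cu j) (hd : ∀ j ∈ s, 0 ≤ d j) (he : ∀ j, 0 ≤ e j) :
    ∑ j ∈ s, c j * e j / (d j + e j) ∈ Set.Icc 0 (∑ j ∈ s, cu j) := by
  constructor
  · exact sum_nonneg fun j hj => by have := (hc j hj).1; have := hd j hj; have := he j; positivity
  · exact sum_le_sum fun j hj =>
      (mul_div_add_le_self (hc j hj).1 (hd j hj) (he j)).trans (hc j hj).2

section Limits

variable {ι : Type*} {l : Filter ι} {f : ι → ℝ}

theorem coe_le_liminf_of_forall_eventually_sub_le {m : ℝ}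
    (h : ∀ γ > 0, ∀ᶠ k in l, m - γ ≤ f k) : (m : EReal) ≤ liminf (fun k => (f k : EReal)) l := by
  refine EReal.ge_of_forall_gt_iff_ge.mp fun z hz => ?_
  have hz : z < m := EReal.coe_lt_coe_iff.mp hz
  exact le_liminf_of_le (by isBoundedDefault)
    ((h (m - z) (by linarith)).mono fun k hk => EReal.coe_le_coe_iff.mpr (by linarith))

theorem limsup_le_coe_of_forall_eventually_le_add {M : ℝ}
    (h : ∀ ε > 0, ∀ᶠ k in l, f k ≤ M + ε) : limsup (fun k => (f k : EReal)) l ≤ M := by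
  refine EReal.le_of_forall_lt_iff_le.mp fun z hz => ?_
  have hz : M < z := EReal.coe_lt_coe_iff.mp hz
  exact limsup_le_of_le (by isBoundedDefault)
    ((h (z - M) (by linarith)).mono fun k hk => EReal.coe_le_coe_iff.mpr (by linarith))

end Limits

section DelayedLogistic

variable {y : ℤ → ℝ} {τ : ℤ → ℕ} {T : ℕ} {K : ℤ}

theorem le_delayed_add_of_forall_succ_le {C : ℝ} (hC : 0 ≤ C) (hτ : ∀ k, τ k ≤ T)
    (h : ∀ k ≥ K, y (k + 1) ≤ y k + C) : ∀ k ≥ K + T, y k ≤ y (k - τ k) + T * C := by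
  intro k hk
  have htel := le_add_mul_of_forall_succ_le (K := k - τ k)
    (fun s hs => h s (by have := hτ k; omega)) k (by omega)
  have hτT : (τ k : ℝ) ≤ T := by exact_mod_cast hτ k
  push_cast at htel
  nlinarith

theorem delayed_sub_le_of_forall_le_succ {C : ℝ} (hC : 0 ≤ C) (hτ : ∀ k, τ k ≤ T)
    (h : ∀ k ≥ K, y k - C ≤ y (k + 1)) : ∀ k ≥ K + T, y (k - τ k) - T * C ≤ y k := by
  intro k hk
  have htel := add_mul_le_of_forall_le_succ (y := y) (K := k - τ k) (C := -C)
    (fun s hs => by linarith [h s (by have := hτ k; omega)]) k (by omega)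
  have hτT : (τ k : ℝ) ≤ T := by exact_mod_cast hτ k
  push_cast at htel
  nlinarith

theorem eventually_le_log_add_of_step_le {A β : ℝ} (hA : 0 < A) (hA1 : A < 1) (hβ : 0 < β)
    (hτ : ∀ k, τ k ≤ T) (hstep : ∀ k ≥ K, y (k + 1) ≤ y k + A - β * exp (y (k - τ k)))
    {ε : ℝ} (hε : 0 < ε) :
    ∀ᶠ k in atTop, y k ≤ log (A / β * (1 - A) ^ (-(T : ℤ))) + ε := by
  set M := log (A / β * (1 - A) ^ (-(T : ℤ)))
  have h1A : 0 < 1 - A := by linarith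
  have hexpM : A * exp (-M) = β * (1 - A) ^ T := by
    rw [exp_neg, exp_log (by positivity), zpow_neg, zpow_natCast]
    field_simp
  have hgrowth : ∀ k ≥ K, y (k + 1) ≤ y k + A := fun k hk => by
    have := hstep k hk
    have : 0 < β * exp (y (k - τ k)) := by positivity
    linarith
  have hdelay : ∀ k ≥ K + T, β * (1 - A) ^ T * exp (y k) ≤ β * exp (y (k - τ k)) := by
    intro k hk
    have htel := le_delayed_add_of_forall_succ_le hA.le hτ hgrowth k hk
    calc β * (1 - A) ^ T * exp (y k) ≤ β * exp (-A) ^ T * exp (y k) := by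
          gcongr; exact one_sub_le_exp_neg A
      _ = β * exp (y k - T * A) := by rw [← exp_nat_mul, mul_assoc, ← exp_add]; ring_nf
      _ ≤ β * exp (y (k - τ k)) := by gcongr; linarith
  have hdecay : ∀ k ≥ K + T, y (k + 1) - M ≤ (y k - M) + A * (1 - exp (y k - M)) := by
    intro k hk
    have := hstep k (by omega)
    have := hdelay k hk
    have hrw : A * exp (y k - M) = β * (1 - A) ^ T * exp (y k) := by
      rw [sub_eq_add_neg, exp_add, mul_comm (exp (y k)), ← mul_assoc, hexpM]
    linarith
  have hd : 0 < A * (exp ε - 1) := mul_pos hA (sub_pos.mpr (one_lt_exp_iff.mpr hε))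
  filter_upwards [eventually_le_of_forall_succ_le_max (y := fun k => y k - M) hd
    fun k hk => (hdecay k hk).trans (add_mul_one_sub_exp_le_max hA.le hA1.le hε.le)] with k hk
  linarith

theorem eventually_log_sub_le_of_le_step {α β M : ℝ} (hα : 0 < α) (hβ : 0 < β)
    (hM : β * exp M < 1) (hτ : ∀ k, τ k ≤ T)
    (hstep : ∀ k ≥ K, y k + α - β * exp (y (k - τ k)) ≤ y (k + 1))
    (hbound : ∀ᶠ k in atTop, y k ≤ M) {γ : ℝ} (hγ : 0 < γ) :
    ∀ᶠ k in atTop, log (α / β * (1 - β * exp M) ^ T) - γ ≤ y k := by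
  obtain ⟨K₁, hK₁⟩ := eventually_atTop.mp hbound
  set q := β * exp M
  have hq1 : 0 < 1 - q := by linarith
  set K₂ := max K (K₁ + T)
  have hdelayed : ∀ k ≥ K₂, β * exp (y (k - τ k)) ≤ q := fun k hk => by
    have := hτ k
    exact mul_le_mul_of_nonneg_left (exp_le_exp.mpr (hK₁ _ (by omega))) hβ.le
  have hgrowth : ∀ k ≥ K₂, y k - q ≤ y (k + 1) := fun k hk => by
    linarith [hstep k (by omega), hdelayed k hk]
  have hdelay : ∀ k ≥ K₂ + T, y (k - τ k) + T * log (1 - q) ≤ y k := fun k hk => by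
    have hlog : log (1 - q) ≤ -q := by linarith [log_le_sub_one_of_pos hq1]
    nlinarith [delayed_sub_le_of_forall_le_succ (by positivity) hτ hgrowth k hk]
  set σ := α * (1 - exp (-γ))
  have hσ : 0 < σ := mul_pos hα (sub_pos.mpr (exp_lt_one_iff.mpr (by linarith)))
  set u := log (α / β) - γ
  have hexpu : β * exp u = α - σ := by
    rw [exp_sub, exp_log (by positivity)]
    simp only [σ, exp_neg]
    field_simp
    ring
  have hmin : ∀ k ≥ K₂ + T, min (y k + σ) (u + σ + T * log (1 - q)) ≤ y (k + 1) := by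
    intro k hk
    rcases le_or_gt (y k + σ) (y (k + 1)) with hfast | hslow
    · exact (min_le_left _ _).trans hfast
    refine (min_le_right _ _).trans ?_
    set v := y (k - τ k)
    have hstep_k := hstep k (by omega)
    have hv : β * exp v ≤ 1 := (hdelayed k (by omega)).trans hM.le
    have huv : u ≤ v := by
      have : β * exp u ≤ β * exp v := by linarith
      exact exp_le_exp.mp (le_of_mul_le_mul_left this hβ)
    linarith [sub_mul_exp_le_sub_mul_exp hβ.le huv hv, hdelay k hk]
  filter_upwards [eventually_ge_of_forall_min_le_succ hσ hmin] with k hk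
  have hlog_split : log (α / β * (1 - q) ^ T) = log (α / β) + T * log (1 - q) := by
    rw [log_mul (by positivity) (by positivity), log_pow]
  linarith

theorem log_le_liminf_of_le_step {α β M : ℝ} (hα : 0 < α) (hβ : 0 < β)
    (hM : β * exp M < 1) (hτ : ∀ k, τ k ≤ T)
    (hstep : ∀ k ≥ K, y k + α - β * exp (y (k - τ k)) ≤ y (k + 1))
    (hupper : ∀ ε > 0, ∀ᶠ k in atTop, y k ≤ M + ε) :
    (log (α / β * (1 - β * exp M) ^ T) : EReal) ≤ liminf (fun k => (y k : EReal)) atTop := by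
  set m : ℝ → ℝ := fun M' => log (α / β * (1 - β * exp M') ^ T)
  have hm : ContinuousAt m M :=
    ContinuousAt.log (by fun_prop) (by have := sub_pos.mpr hM; positivity)
  have hlim : Tendsto (fun ε => (m (M + ε) : EReal)) (𝓝[>] 0) (𝓝 (m M)) :=
    (continuous_coe_real_ereal.tendsto _).comp <|
      (hm.tendsto.comp ((continuous_const_add M).tendsto' 0 M (add_zero M))).mono_left
        nhdsWithin_le_nhds
  have hsmall : ∀ᶠ ε in 𝓝[>] 0, β * exp (M + ε) < 1 := by
    refine nhdsWithin_le_nhds (ContinuousAt.eventually_lt (by fun_prop) continuousAt_const ?_)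
    simpa using hM
  refine le_of_tendsto hlim ?_
  filter_upwards [hsmall, self_mem_nhdsWithin] with ε hε hε0
  exact coe_le_liminf_of_forall_eventually_sub_le fun γ hγ =>
    eventually_log_sub_le_of_le_step hα hβ hε hτ hstep (hupper ε hε0) hγ

end DelayedLogistic

theorem permanence_discrete_general
    (n : ℕ) (k₀ : ℤ) (τm τp : ℕ)
    (a b : Fin n → ℤ → ℝ) (c : Fin n → Fin n → ℤ → ℝ) (d : Fin n → Fin n → ℝ)
    (τ δ : Fin n → ℤ → ℕ)
    (al au bl bu : Fin n → ℝ) (cl cu : Fin n → Fin n → ℝ)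
    (xM xm : Fin n → ℝ) (x : Fin n → ℤ → ℝ)
    -- (H1): bounds of the coefficients
    (hal : ∀ i, 0 < al i) (ha : ∀ i k, al i ≤ a i k ∧ a i k ≤ au i)
    (hbl : ∀ i, 0 < bl i) (hb : ∀ i k, bl i ≤ b i k ∧ b i k ≤ bu i)
    (hcl : ∀ i j, i ≠ j → 0 < cl i j)
    (hc : ∀ i j k, i ≠ j → cl i j ≤ c i j k ∧ c i j k ≤ cu i j)
    (hdij : ∀ i j, i ≠ j → 1 < d i j)
    (hτ : ∀ i k, τm ≤ τ i k ∧ τ i k ≤ τp)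
    -- regressivity
    (hreg : ∀ i, au i + ∑ j ∈ Finset.univ.erase i, cu i j < 1)
    -- definitions of the permanence bounds
    (hxM : ∀ i, xM i =
      Real.log (((au i + ∑ j ∈ Finset.univ.erase i, cu i j) / bl i) *
        (1 - (au i + ∑ j ∈ Finset.univ.erase i, cu i j)) ^ (-(τp : ℤ))))
    (hxm : ∀ i, xm i =
      Real.log ((al i / bu i) * (1 - bu i * Real.exp (xM i)) ^ τp))
    -- (H3)
    (hH3a : ∀ i, bu i * Real.exp (xM i) < 1)
    -- x is a solution with nonnegative initial data
    (hsol : ∀ i, ∀ k : ℤ, k₀ ≤ k →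
      x i (k + 1) - x i k =
        a i k - b i k * Real.exp (x i (k - (τ i k : ℤ))) +
          ∑ j ∈ Finset.univ.erase i, c i j k * Real.exp (x j (k - (δ j k : ℤ))) /
            (d i j + Real.exp (x j (k - (δ j k : ℤ))))) :
    ∀ i, ((xm i : EReal)) ≤ Filter.liminf (fun k : ℤ => ((x i k : EReal))) Filter.atTop ∧
      Filter.limsup (fun k : ℤ => ((x i k : EReal))) Filter.atTop ≤ ((xM i : EReal)) := by
  intro i
  have hinteraction : ∀ k, ∑ j ∈ univ.erase i,
      c i j k * exp (x j (k - δ j k)) / (d i j + exp (x j (k - δ j k))) ∈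
        Set.Icc 0 (∑ j ∈ univ.erase i, cu i j) := fun k =>
    sum_mul_div_add_mem_Icc _
      (fun j hj => have hij := (mem_erase.mp hj).1.symm
        ⟨(hcl i j hij).le.trans (hc i j k hij).1, (hc i j k hij).2⟩)
      (fun j hj => (zero_lt_one.trans (hdij i j (mem_erase.mp hj).1.symm)).le)
      (fun j => (exp_pos _).le)
  have hA : 0 < au i + ∑ j ∈ univ.erase i, cu i j := by
    linarith [hal i, (ha i 0).1, (ha i 0).2, (hinteraction 0).1.trans (hinteraction 0).2]
  have hbu : 0 < bu i := (hbl i).trans_le ((hb i 0).1.trans (hb i 0).2)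
  have hupper_step : ∀ k ≥ k₀, x i (k + 1) ≤
      x i k + (au i + ∑ j ∈ univ.erase i, cu i j) - bl i * exp (x i (k - τ i k)) := by
    intro k hk
    linarith [hsol i k hk, (hinteraction k).2, (ha i k).2,
      mul_le_mul_of_nonneg_right (hb i k).1 (exp_pos (x i (k - τ i k))).le]
  have hlower_step : ∀ k ≥ k₀,
      x i k + al i - bu i * exp (x i (k - τ i k)) ≤ x i (k + 1) := by
    intro k hk
    linarith [hsol i k hk, (hinteraction k).1, (ha i k).1,
      mul_le_mul_of_nonneg_right (hb i k).2 (exp_pos (x i (k - τ i k))).le]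
  have hupper : ∀ ε > 0, ∀ᶠ k in atTop, x i k ≤ xM i + ε := fun ε hε => by
    rw [hxM i]
    exact eventually_le_log_add_of_step_le hA (hreg i) (hbl i) (fun k => (hτ i k).2)
      hupper_step hε
  refine ⟨?_, limsup_le_coe_of_forall_eventually_le_add hupper⟩
  rw [hxm i]
  exact log_le_liminf_of_le_step (hal i) hbu (hH3a i) (fun k => (hτ i k).2) hlower_step hupper

/-- Permanence (Lemma 3.1 / Theorem 3.1, case 𝕋 = ℤ) for the discrete
multispecies Lotka–Volterra mutualism system with time-varying delays:
under (H1)–(H3), every solution with nonnegative initial data satisfies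
`x_i^m ≤ liminf x_i ≤ limsup x_i ≤ x_i^M` for every species `i`. -/
theorem permanence_discrete
    (n : ℕ) (k₀ : ℤ) (τm τp δm δp θ : ℕ)
    (a b : Fin n → ℤ → ℝ) (c : Fin n → Fin n → ℤ → ℝ) (d : Fin n → Fin n → ℝ)
    (τ δ : Fin n → ℤ → ℕ)
    (al au bl bu : Fin n → ℝ) (cl cu : Fin n → Fin n → ℝ)
    (xM xm : Fin n → ℝ) (x : Fin n → ℤ → ℝ)
    -- (H1): bounds of the coefficients
    (hal : ∀ i, 0 < al i) (ha : ∀ i k, al i ≤ a i k ∧ a i k ≤ au i)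
    (hbl : ∀ i, 0 < bl i) (hb : ∀ i k, bl i ≤ b i k ∧ b i k ≤ bu i)
    (hcl : ∀ i j, i ≠ j → 0 < cl i j)
    (hc : ∀ i j k, i ≠ j → cl i j ≤ c i j k ∧ c i j k ≤ cu i j)
    (hdij : ∀ i j, i ≠ j → 1 < d i j)
    (hτm : 0 < τm) (hτ : ∀ i k, τm ≤ τ i k ∧ τ i k ≤ τp)
    (hδm : 0 < δm) (hδ : ∀ j k, δm ≤ δ j k ∧ δ j k ≤ δp)
    (hθ : θ = max τp δp)
    -- regressivity
    (hreg : ∀ i, au i + ∑ j ∈ Finset.univ.erase i, cu i j < 1)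
    -- definitions of the permanence bounds
    (hxM : ∀ i, xM i =
      Real.log (((au i + ∑ j ∈ Finset.univ.erase i, cu i j) / bl i) *
        (1 - (au i + ∑ j ∈ Finset.univ.erase i, cu i j)) ^ (-(τp : ℤ))))
    (hxm : ∀ i, xm i =
      Real.log ((al i / bu i) * (1 - bu i * Real.exp (xM i)) ^ τp))
    -- (H3)
    (hH3a : ∀ i, bu i * Real.exp (xM i) < 1)
    (hH3b : ∀ i, al i * (1 - bu i * Real.exp (xM i)) ^ τp > bu i)
    -- x is a solution with nonnegative initial data
    (hinit : ∀ i, ∀ s : ℤ, k₀ - (θ : ℤ) ≤ s → s ≤ k₀ → 0 ≤ x i s)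
    (hsol : ∀ i, ∀ k : ℤ, k₀ ≤ k →
      x i (k + 1) - x i k =
        a i k - b i k * Real.exp (x i (k - (τ i k : ℤ))) +
          ∑ j ∈ Finset.univ.erase i, c i j k * Real.exp (x j (k - (δ j k : ℤ))) /
            (d i j + Real.exp (x j (k - (δ j k : ℤ))))) :
    ∀ i, ((xm i : EReal)) ≤ Filter.liminf (fun k : ℤ => ((x i k : EReal))) Filter.atTop ∧
      Filter.limsup (fun k : ℤ => ((x i k : EReal))) Filter.atTop ≤ ((xM i : EReal)) :=
  permanence_discrete_general n k₀ τm τp a b c d τ δ al au bl bu cl cu xM xm x hal ha hbl hb hcl hc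
    hdij hτ hreg hxM hxm hH3a hsol
end
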